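/- arXiv:0804.1380 — 7 statements merged into one kernel-verified Lean document; each statement's English description precedes it below -/
import Mathlib

section
/- For fixed positive integers ℓ ≥ 2 and k, there is a bijection between the set of ℓ-cores whose largest part equals k and the set of (ℓ−1)-cores whose largest part is at most k. -/
/-!
Encode a partition `l` by its beta-set `β`, the set of first-column hook lengths
`l_a + (len - 1 - a)`. The hook lengths in row `a` are the differences `β_a - g` with `g ∉ β`,
`g < β_a`, so `l` is an `ℓ`-core iff `β` is closed under `x ↦ x - ℓ`. Since `0 ∉ β`, such a set
is determined by its `ℓ`-abacus, the numbers of beads on the runners `1, …, ℓ - 1`, and the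
largest part of `l` is `max β + 1 - |β|`.

Delete the runner carrying the largest bead (the rows with `h_(i,1) ≡ h_(1,1) mod ℓ`) and close the
gap. Positions compare lexicographically by (level, runner), so every remaining bead stays below the
old top bead, which says exactly that the new `(ℓ - 1)`-core has largest part at most `k`.
Conversely, the runner and level of the deleted top bead are the remainder and quotient of
`k + |β'| - 1` by `ℓ - 1`.
-/

/-- A partition: a weakly decreasing list of positive integers. -/
def IsPartition (l : List ℕ) : Prop := l.Pairwise (· ≥ ·) ∧ ∀ x ∈ l, 0 < x

/-- Hook length of the box in (0-based) row `a` and (1-based) column `c`. -/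
def hook (l : List ℕ) (a c : ℕ) : ℕ :=
  (l.getD a 0 - c) + ((List.range l.length).filter (fun i => decide (a < i ∧ c ≤ l.getD i 0))).length + 1

/-- `l` is an `ℓ`-core: no box has hook length divisible by `ℓ`. -/
def IsCore (ℓ : ℕ) (l : List ℕ) : Prop :=
  ∀ a < l.length, ∀ c, 1 ≤ c → c ≤ l.getD a 0 → ¬ (ℓ ∣ hook l a c)

/-- First-column hook lengths of `l` (the beta-numbers). -/
def betaList (l : List ℕ) : List ℕ := (List.range l.length).map (fun a => hook l a 1)

open Finset

namespace CoreBijection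

def SubClosed (t : ℕ) (S : Finset ℕ) : Prop := ∀ x ∈ S, t ≤ x → x - t ∈ S

theorem SubClosed.sub_mul_mem {t : ℕ} {S : Finset ℕ} (hS : SubClosed t S) {x : ℕ} (hx : x ∈ S) :
    ∀ m, t * m ≤ x → x - t * m ∈ S
  | 0, _ => by simpa using hx
  | m + 1, h => by
    rw [Nat.mul_succ] at h ⊢
    rw [← Nat.sub_sub]
    exact hS _ (hS.sub_mul_mem hx m (by omega)) (by omega)

theorem add_sub_le_of_strictMono {n : ℕ} {e : Fin n → ℕ} (he : StrictMono e) {i j : Fin n}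
    (hij : i ≤ j) : e i + (j - i) ≤ e j := by
  have hsub : (Icc i j).image e ⊆ Icc (e i) (e j) := by
    intro x hx
    obtain ⟨y, hy, rfl⟩ := mem_image.1 hx
    rw [mem_Icc] at hy ⊢
    exact ⟨he.monotone hy.1, he.monotone hy.2⟩
  have := card_le_card hsub
  rw [card_image_of_injective _ he.injective, Fin.card_Icc, Nat.card_Icc] at this
  omega

section BetaSet

variable {l : List ℕ}

theorem getD_antitone (hl : l.Pairwise (· ≥ ·)) : Antitone (l.getD · 0) := by
  intro i j hij
  by_cases hj : j < l.length
  · rcases hij.eq_or_lt with rfl | hlt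
    · rfl
    · simp only [List.getD_eq_getElem _ _ hj, List.getD_eq_getElem _ _ (hlt.trans hj)]
      exact List.pairwise_iff_getElem.1 hl _ _ _ _ hlt
  · simp only [List.getD_eq_default _ _ (not_lt.1 hj)]
    exact Nat.zero_le _

theorem getD_pos (hl : IsPartition l) {i : ℕ} (hi : i < l.length) : 0 < l.getD i 0 := by
  rw [List.getD_eq_getElem _ _ hi]
  exact hl.2 _ (List.getElem_mem hi)

def colLength (l : List ℕ) (c : ℕ) : ℕ := #{i ∈ range l.length | c ≤ l.getD i 0}

theorem colLength_le_length (l : List ℕ) (c : ℕ) : colLength l c ≤ l.length :=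
  (card_filter_le _ _).trans_eq (card_range _)

theorem colLength_antitone (l : List ℕ) : Antitone (colLength l) :=
  fun _ _ hcc' => card_le_card (monotone_filter_right _ fun _ _ h => hcc'.trans h)

theorem lt_colLength_iff (hl : l.Pairwise (· ≥ ·)) {c i : ℕ} (hi : i < l.length) :
    i < colLength l c ↔ c ≤ l.getD i 0 := by
  constructor
  · intro h
    by_contra! hc
    have : {j ∈ range l.length | c ≤ l.getD j 0} ⊆ range i := fun j hj => by
      simp only [mem_filter, mem_range] at hj ⊢
      by_contra! hij
      exact (hj.2.trans (getD_antitone hl hij)).not_gt hc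
    exact (card_le_card this).trans_eq (card_range i) |>.not_gt h
  · intro h
    have : range (i + 1) ⊆ {j ∈ range l.length | c ≤ l.getD j 0} := fun j hj => by
      simp only [mem_filter, mem_range] at hj ⊢
      exact ⟨by omega, h.trans (getD_antitone hl (by omega))⟩
    exact (card_range _).symm.trans_le (card_le_card this)

theorem hook_eq (hl : l.Pairwise (· ≥ ·)) (a c : ℕ) :
    hook l a c = (l.getD a 0 - c) + (colLength l c - (a + 1)) + 1 := by
  have hrows : {i ∈ range l.length | a < i ∧ c ≤ l.getD i 0} = Ico (a + 1) (colLength l c) := by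
    ext i
    simp only [mem_filter, mem_range, mem_Ico]
    constructor
    · rintro ⟨hi, hai, hci⟩
      exact ⟨hai, (lt_colLength_iff hl hi).2 hci⟩
    · rintro ⟨hai, hic⟩
      have hi := hic.trans_le (colLength_le_length l c)
      exact ⟨hi, hai, (lt_colLength_iff hl hi).1 hic⟩
  rw [hook, ← Nat.card_Ico (a + 1), ← hrows]
  rfl

def beta (l : List ℕ) (a : ℕ) : ℕ := l.getD a 0 + (l.length - 1 - a)

def betaSet (l : List ℕ) : Finset ℕ := (range l.length).image (beta l)

theorem mem_betaSet {x : ℕ} : x ∈ betaSet l ↔ ∃ a < l.length, beta l a = x := by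
  simp [betaSet]

theorem beta_mem_betaSet {a : ℕ} (ha : a < l.length) : beta l a ∈ betaSet l :=
  mem_image_of_mem _ (mem_range.2 ha)

theorem beta_strictAntiOn (hl : l.Pairwise (· ≥ ·)) : StrictAntiOn (beta l) (Set.Iio l.length) := by
  intro i _ j hj hij
  have : l.getD j 0 ≤ l.getD i 0 := getD_antitone hl hij.le
  simp only [Set.mem_Iio] at hj
  simp only [beta]
  omega

theorem card_betaSet (hl : l.Pairwise (· ≥ ·)) : #(betaSet l) = l.length := by
  rw [betaSet, card_image_of_injOn, card_range]
  simpa using (beta_strictAntiOn hl).injOn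

theorem beta_le_beta_zero (hl : l.Pairwise (· ≥ ·)) (a : ℕ) : beta l a ≤ beta l 0 := by
  have : l.getD a 0 ≤ l.getD 0 0 := getD_antitone hl (Nat.zero_le a)
  simp only [beta]
  omega

theorem card_betaSet_inter_range_beta (hl : l.Pairwise (· ≥ ·)) {a : ℕ} (ha : a < l.length) :
    #(betaSet l ∩ range (beta l a)) = l.length - 1 - a := by
  have : betaSet l ∩ range (beta l a) = (Ioo a l.length).image (beta l) := by
    ext x
    simp only [mem_inter, mem_range, mem_betaSet, mem_image, mem_Ioo]
    constructor
    · rintro ⟨⟨i, hi, rfl⟩, hlt⟩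
      refine ⟨i, ⟨?_, hi⟩, rfl⟩
      by_contra! hia
      exact hlt.not_ge ((beta_strictAntiOn hl).antitoneOn hi ha hia)
    · rintro ⟨i, ⟨hai, hi⟩, rfl⟩
      exact ⟨⟨i, hi, rfl⟩, beta_strictAntiOn hl ha hi hai⟩
  rw [this, card_image_of_injOn, Nat.card_Ioo]
  · omega
  · exact (beta_strictAntiOn hl).injOn.mono fun i hi => (mem_Ioo.1 hi).2

/-- For `c ≥ 1`, the position of the horizontal step of the boundary path in column `c`; these
are the positions not in `betaSet l`. -/
def gap (l : List ℕ) (c : ℕ) : ℕ := c - 1 + (l.length - colLength l c)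

theorem hook_add_gap (hl : l.Pairwise (· ≥ ·)) {a c : ℕ} (ha : a < l.length) (hc1 : 1 ≤ c)
    (hc : c ≤ l.getD a 0) :
    hook l a c + gap l c = beta l a := by
  have := (lt_colLength_iff hl ha).2 hc
  have := colLength_le_length l c
  rw [hook_eq hl, gap, beta]
  omega

theorem hook_pos (l : List ℕ) (a c : ℕ) : 0 < hook l a c := by
  rw [hook]
  omega

theorem gap_lt_beta (hl : l.Pairwise (· ≥ ·)) {a c : ℕ} (ha : a < l.length) (hc1 : 1 ≤ c)
    (hc : c ≤ l.getD a 0) : gap l c < beta l a := by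
  have := hook_add_gap hl ha hc1 hc
  have := hook_pos l a c
  omega

theorem gap_notMem_betaSet (hl : l.Pairwise (· ≥ ·)) {c : ℕ} (hc1 : 1 ≤ c) :
    gap l c ∉ betaSet l := by
  rintro h
  obtain ⟨i, hi, h⟩ := mem_betaSet.1 h
  have := colLength_le_length l c
  have hiff := lt_colLength_iff hl hi (c := c)
  simp only [gap, beta] at h
  by_cases hci : c ≤ l.getD i 0
  · have := hiff.2 hci
    omega
  · have := mt hiff.1 hci
    omega

theorem gap_strictMonoOn (l : List ℕ) : StrictMonoOn (gap l) (Set.Ici 1) := by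
  intro c hc c' _ hcc'
  have := colLength_antitone l hcc'.le
  have := colLength_le_length l c
  simp only [Set.mem_Ici] at hc
  simp only [gap]
  omega

theorem image_gap (hl : l.Pairwise (· ≥ ·)) {a : ℕ} (ha : a < l.length) :
    (Icc 1 (l.getD a 0)).image (gap l) = range (beta l a) \ betaSet l := by
  apply eq_of_subset_of_card_le
  · intro x hx
    obtain ⟨c, hc, rfl⟩ := mem_image.1 hx
    rw [mem_Icc] at hc
    exact mem_sdiff.2 ⟨mem_range.2 (gap_lt_beta hl ha hc.1 hc.2), gap_notMem_betaSet hl hc.1⟩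
  · rw [card_image_of_injOn ((gap_strictMonoOn l).injOn.mono fun c hc => (mem_Icc.1 hc).1),
      Nat.card_Icc, card_sdiff, card_range, card_betaSet_inter_range_beta hl ha, beta]
    omega

theorem exists_hook_eq_iff (hl : l.Pairwise (· ≥ ·)) {a : ℕ} (ha : a < l.length) (h : ℕ) :
    (∃ c, 1 ≤ c ∧ c ≤ l.getD a 0 ∧ hook l a c = h) ↔ h ≤ beta l a ∧ beta l a - h ∉ betaSet l := by
  constructor
  · rintro ⟨c, hc1, hc, rfl⟩
    have := hook_add_gap hl ha hc1 hc
    refine ⟨by omega, ?_⟩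
    rw [show beta l a - hook l a c = gap l c by omega]
    exact gap_notMem_betaSet hl hc1
  · rintro ⟨hle, hnot⟩
    have hmem : beta l a - h ∈ (Icc 1 (l.getD a 0)).image (gap l) := by
      rw [image_gap hl ha]
      refine mem_sdiff.2 ⟨mem_range.2 ?_, hnot⟩
      have : h ≠ 0 := by
        rintro rfl
        exact hnot (beta_mem_betaSet ha)
      omega
    obtain ⟨c, hc, hgap⟩ := mem_image.1 hmem
    rw [mem_Icc] at hc
    have := hook_add_gap hl ha hc.1 hc.2
    exact ⟨c, hc.1, hc.2, by omega⟩

theorem isCore_iff_subClosed (hl : l.Pairwise (· ≥ ·)) (t : ℕ) :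
    IsCore t l ↔ SubClosed t (betaSet l) := by
  constructor
  · intro hcore _ hb ht
    obtain ⟨a, ha, rfl⟩ := mem_betaSet.1 hb
    by_contra hnot
    obtain ⟨c, hc1, hc, hhook⟩ := (exists_hook_eq_iff hl ha t).2 ⟨ht, hnot⟩
    exact hcore a ha c hc1 hc (hhook ▸ dvd_refl t)
  · rintro hS a ha c hc1 hc ⟨m, hm⟩
    obtain ⟨hle, hnot⟩ := (exists_hook_eq_iff hl ha _).1 ⟨c, hc1, hc, hm⟩
    exact hnot (hS.sub_mul_mem (beta_mem_betaSet ha) m hle)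

theorem headD_add_card_betaSet (hl : l.Pairwise (· ≥ ·)) :
    l.headD 0 + #(betaSet l) = (betaSet l).sup (· + 1) := by
  rcases Nat.eq_zero_or_pos l.length with h0 | h0
  · rw [List.length_eq_zero_iff.1 h0]
    rfl
  have hsup : (betaSet l).sup (· + 1) = beta l 0 + 1 := by
    refine le_antisymm (Finset.sup_le fun x hx => ?_) (le_sup (f := (· + 1)) (beta_mem_betaSet h0))
    obtain ⟨a, -, rfl⟩ := mem_betaSet.1 hx
    exact Nat.succ_le_succ (beta_le_beta_zero hl a)
  have hhead : l.headD 0 = l.getD 0 0 := by cases l <;> rfl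
  rw [hsup, hhead, card_betaSet hl, beta]
  omega

theorem zero_notMem_betaSet (hl : IsPartition l) : 0 ∉ betaSet l := by
  intro h
  obtain ⟨a, ha, h⟩ := mem_betaSet.1 h
  have := getD_pos hl ha
  rw [beta] at h
  omega

end BetaSet

/-- Row `a` comes from the `a`-th largest element of `S`. -/
def ofBetaSet (S : Finset ℕ) : List ℕ :=
  List.ofFn fun a : Fin #S => S.orderEmbOfFin rfl a.rev - a.rev

section OfBetaSet

variable {S : Finset ℕ}

theorem length_ofBetaSet (S : Finset ℕ) : (ofBetaSet S).length = #S := List.length_ofFn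

theorem getD_ofBetaSet (a : Fin #S) :
    (ofBetaSet S).getD a 0 = S.orderEmbOfFin rfl a.rev - a.rev := by
  simp [ofBetaSet]

theorem orderEmbOfFin_zero_add_le (i : Fin #S) :
    S.orderEmbOfFin rfl ⟨0, i.pos⟩ + i ≤ S.orderEmbOfFin rfl i := by
  simpa using add_sub_le_of_strictMono (S.orderEmbOfFin rfl).strictMono
    (show (⟨0, i.pos⟩ : Fin #S) ≤ i from Nat.zero_le _)

theorem isPartition_ofBetaSet (h0 : 0 ∉ S) : IsPartition (ofBetaSet S) := by
  have hmono := (S.orderEmbOfFin rfl).strictMono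
  constructor
  · refine List.pairwise_ofFn.2 fun i j hij => ?_
    have := add_sub_le_of_strictMono hmono (Fin.rev_lt_rev.2 hij).le
    simp only [ge_iff_le]
    omega
  · simp only [ofBetaSet, List.mem_ofFn]
    rintro _ ⟨a, rfl⟩
    have := orderEmbOfFin_zero_add_le a.rev
    have : S.orderEmbOfFin rfl ⟨0, a.pos⟩ ≠ 0 := fun h => h0 (h ▸ S.orderEmbOfFin_mem rfl _)
    omega

theorem beta_ofBetaSet (a : Fin #S) : beta (ofBetaSet S) a = S.orderEmbOfFin rfl a.rev := by
  have := orderEmbOfFin_zero_add_le a.rev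
  rw [beta, getD_ofBetaSet, length_ofBetaSet, Fin.val_rev]
  rw [Fin.val_rev] at this
  omega

theorem betaSet_ofBetaSet (S : Finset ℕ) : betaSet (ofBetaSet S) = S := by
  ext x
  rw [mem_betaSet, length_ofBetaSet, ← Finset.mem_coe, ← S.range_orderEmbOfFin rfl,
    Set.mem_range, Fin.rev_surjective.exists]
  constructor
  · rintro ⟨a, ha, rfl⟩
    exact ⟨⟨a, ha⟩, (beta_ofBetaSet ⟨a, ha⟩).symm⟩
  · rintro ⟨a, rfl⟩
    exact ⟨a, a.2, beta_ofBetaSet a⟩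

theorem ofBetaSet_betaSet {l : List ℕ} (hl : l.Pairwise (· ≥ ·)) : ofBetaSet (betaSet l) = l := by
  have hcard := card_betaSet hl
  have henum : ⇑((betaSet l).orderEmbOfFin rfl) = fun i => beta l i.rev :=
    ((betaSet l).orderEmbOfFin_unique rfl (fun i => beta_mem_betaSet (by omega))
      fun i j hij => beta_strictAntiOn hl (Set.mem_Iio.2 (hcard ▸ j.rev.2))
        (Set.mem_Iio.2 (hcard ▸ i.rev.2)) (Fin.rev_lt_rev.2 hij)).symm
  refine List.ext_getElem (by rw [length_ofBetaSet, hcard]) fun a h₁ h₂ => ?_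
  rw [← List.getD_eq_getElem _ 0, ← List.getD_eq_getElem _ 0]
  have := getD_ofBetaSet (S := betaSet l) ⟨a, by rwa [length_ofBetaSet] at h₁⟩
  simp only [henum, Fin.rev_rev, Fin.val_rev] at this
  rw [this, beta, hcard]
  omega

end OfBetaSet

def betaSetEquiv : {l : List ℕ // IsPartition l} ≃ {S : Finset ℕ // 0 ∉ S} where
  toFun l := ⟨betaSet l, zero_notMem_betaSet l.2⟩
  invFun S := ⟨ofBetaSet S, isPartition_ofBetaSet S.2⟩
  left_inv l := Subtype.ext (ofBetaSet_betaSet l.2.1)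
  right_inv S := Subtype.ext (betaSet_ofBetaSet S)

section Abacus

variable {T : ℕ}

/-- Runner `r` of the `(T + 1)`-abacus holds the positions `≡ r + 1 (mod T + 1)`, so runner `T`
holds the multiples of `T + 1`; `bead T r j` is its `j`-th position, counting from `0`. -/
def bead (T r j : ℕ) : ℕ := r + 1 + j * (T + 1)

def runnerOf (T x : ℕ) : ℕ := (x - 1) % (T + 1)

def levelOf (T x : ℕ) : ℕ := (x - 1) / (T + 1)

theorem bead_runnerOf_levelOf {x : ℕ} (hx : 0 < x) : bead T (runnerOf T x) (levelOf T x) = x := by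
  have := Nat.mod_add_div (x - 1) (T + 1)
  rw [bead, runnerOf, levelOf, mul_comm]
  omega

theorem runnerOf_le (T x : ℕ) : runnerOf T x ≤ T :=
  Nat.lt_succ_iff.1 (Nat.mod_lt _ T.succ_pos)

theorem runnerOf_bead {r : ℕ} (j : ℕ) (hr : r ≤ T) : runnerOf T (bead T r j) = r := by
  rw [runnerOf, bead, show r + 1 + j * (T + 1) - 1 = r + j * (T + 1) by omega,
    Nat.add_mul_mod_self_right, Nat.mod_eq_of_lt (by omega)]

theorem levelOf_bead {r : ℕ} (j : ℕ) (hr : r ≤ T) : levelOf T (bead T r j) = j := by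
  rw [levelOf, bead, show r + 1 + j * (T + 1) - 1 = r + j * (T + 1) by omega,
    Nat.add_mul_div_right _ _ T.succ_pos, Nat.div_eq_of_lt (by omega), zero_add]

theorem bead_add (T r j d : ℕ) : bead T r (j + d) = bead T r j + (T + 1) * d := by
  simp only [bead]
  ring

theorem bead_self (T q : ℕ) : bead T T q = (T + 1) * (q + 1) := by
  simp only [bead]
  ring

theorem bead_strictMono (T r : ℕ) : StrictMono (bead T r) := fun j j' h => by
  have := Nat.mul_lt_mul_of_pos_right h (by omega : 0 < T + 1)
  simp only [bead]
  omega

theorem bead_lt_bead_iff {r c j q : ℕ} (hr : r < T) (hc : c ≤ T) :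
    bead T r j < bead T c q ↔ j < q ∨ j = q ∧ r < c := by
  constructor
  · intro h
    rcases lt_trichotomy j q with hjq | rfl | hqj
    · exact Or.inl hjq
    · exact Or.inr ⟨rfl, by simp only [bead] at h; omega⟩
    · obtain ⟨d, rfl⟩ := Nat.exists_eq_add_of_lt hqj
      rw [bead_add, bead, bead] at h
      nlinarith
  · rintro (hjq | ⟨rfl, hrc⟩)
    · obtain ⟨d, rfl⟩ := Nat.exists_eq_add_of_lt hjq
      rw [bead_add, bead, bead]
      nlinarith
    · simp only [bead]
      omega

def abacusSet (T : ℕ) (n : Fin T → ℕ) : Finset ℕ :=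
  univ.biUnion fun r : Fin T => (range (n r)).image (bead T r)

theorem mem_abacusSet {n : Fin T → ℕ} {x : ℕ} :
    x ∈ abacusSet T n ↔ ∃ r : Fin T, ∃ j < n r, bead T r j = x := by
  simp [abacusSet]

theorem filter_runnerOf_abacusSet (n : Fin T → ℕ) (r : Fin T) :
    {x ∈ abacusSet T n | runnerOf T x = r} = (range (n r)).image (bead T r) := by
  ext x
  simp only [mem_filter, mem_abacusSet, mem_image, mem_range]
  constructor
  · rintro ⟨⟨r', j, hj, rfl⟩, hr⟩
    obtain rfl : r' = r := Fin.ext (by rwa [runnerOf_bead _ r'.2.le] at hr)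
    exact ⟨j, hj, rfl⟩
  · rintro ⟨j, hj, rfl⟩
    exact ⟨⟨r, j, hj, rfl⟩, runnerOf_bead _ r.2.le⟩

theorem card_abacusSet (n : Fin T → ℕ) : #(abacusSet T n) = ∑ r, n r := by
  rw [abacusSet, card_biUnion]
  · simp only [card_image_of_injective _ (bead_strictMono T _).injective, card_range]
  · intro r _ r' _ hrr'
    refine disjoint_left.2 fun x hx hx' => hrr' (Fin.ext ?_)
    obtain ⟨j, -, rfl⟩ := mem_image.1 hx
    obtain ⟨j', -, h⟩ := mem_image.1 hx'
    rw [← runnerOf_bead j r.2.le, ← h, runnerOf_bead j' r'.2.le]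

theorem zero_notMem_abacusSet (n : Fin T → ℕ) : 0 ∉ abacusSet T n := by
  simp [mem_abacusSet, bead]

theorem subClosed_abacusSet (n : Fin T → ℕ) : SubClosed (T + 1) (abacusSet T n) := by
  intro x hx hle
  obtain ⟨r, j, hj, rfl⟩ := mem_abacusSet.1 hx
  obtain _ | j := j
  · simp only [bead] at hle
    omega
  · refine mem_abacusSet.2 ⟨r, j, by omega, ?_⟩
    rw [bead_add]
    omega

def runnerCount (T : ℕ) (S : Finset ℕ) (r : Fin T) : ℕ := #{x ∈ S | runnerOf T x = r}

theorem runnerCount_abacusSet (n : Fin T → ℕ) : runnerCount T (abacusSet T n) = n := by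
  funext r
  rw [runnerCount, filter_runnerOf_abacusSet,
    card_image_of_injective _ (bead_strictMono T _).injective, card_range]

theorem SubClosed.bead_mem_of_le {S : Finset ℕ} (hS : SubClosed (T + 1) S) {r i j : ℕ}
    (hij : i ≤ j) (h : bead T r j ∈ S) : bead T r i ∈ S := by
  obtain ⟨d, rfl⟩ := Nat.exists_eq_add_of_le hij
  have := hS.sub_mul_mem h d (by rw [bead_add]; omega)
  rwa [bead_add, Nat.add_sub_cancel] at this

theorem SubClosed.runnerOf_lt {S : Finset ℕ} (hS : SubClosed (T + 1) S) (h0 : 0 ∉ S) {x : ℕ}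
    (hx : x ∈ S) : runnerOf T x < T := by
  have hbead := bead_runnerOf_levelOf (T := T) (Nat.pos_of_ne_zero (ne_of_mem_of_not_mem hx h0))
  refine (runnerOf_le T x).lt_of_ne fun hT => h0 ?_
  rw [hT, bead_self] at hbead
  have := hS.sub_mul_mem hx (levelOf T x + 1) hbead.le
  rwa [hbead, Nat.sub_self] at this

theorem SubClosed.bead_mem_iff {S : Finset ℕ} (hS : SubClosed (T + 1) S) (h0 : 0 ∉ S)
    (r : Fin T) (j : ℕ) : bead T r j ∈ S ↔ j < runnerCount T S r := by
  constructor
  · intro hj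
    have hsub : (range (j + 1)).image (bead T r) ⊆ {y ∈ S | runnerOf T y = r} := by
      intro y hy
      obtain ⟨i, hi, rfl⟩ := mem_image.1 hy
      exact mem_filter.2
        ⟨hS.bead_mem_of_le (Nat.lt_succ_iff.1 (mem_range.1 hi)) hj, runnerOf_bead i r.2.le⟩
    have := card_le_card hsub
    rwa [card_image_of_injective _ (bead_strictMono T _).injective, card_range] at this
  · intro hj
    by_contra hx
    have hsub : {y ∈ S | runnerOf T y = r} ⊆ (range j).image (bead T r) := by
      intro y hy
      rw [mem_filter] at hy
      have hy' := bead_runnerOf_levelOf (T := T) (Nat.pos_of_ne_zero (ne_of_mem_of_not_mem hy.1 h0))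
      rw [hy.2] at hy'
      refine mem_image.2 ⟨levelOf T y, mem_range.2 ?_, hy'⟩
      by_contra! hjy
      exact hx (hS.bead_mem_of_le hjy (hy'.symm ▸ hy.1))
    have := (card_le_card hsub).trans card_image_le
    rw [card_range] at this
    exact hj.not_ge this

theorem abacusSet_runnerCount {S : Finset ℕ} (h0 : 0 ∉ S) (hS : SubClosed (T + 1) S) :
    abacusSet T (runnerCount T S) = S := by
  ext x
  rw [mem_abacusSet]
  constructor
  · rintro ⟨r, j, hj, rfl⟩
    exact (hS.bead_mem_iff h0 r j).2 hj
  · intro hx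
    have hbead := bead_runnerOf_levelOf (T := T) (Nat.pos_of_ne_zero (ne_of_mem_of_not_mem hx h0))
    refine ⟨⟨runnerOf T x, hS.runnerOf_lt h0 hx⟩, levelOf T x, (hS.bead_mem_iff h0 _ _).1 ?_, hbead⟩
    rwa [hbead]

def abacusEquiv (T : ℕ) : {S : Finset ℕ // 0 ∉ S ∧ SubClosed (T + 1) S} ≃ (Fin T → ℕ) where
  toFun S := runnerCount T S
  invFun n := ⟨abacusSet T n, zero_notMem_abacusSet n, subClosed_abacusSet n⟩
  left_inv S := Subtype.ext (abacusSet_runnerCount S.2.1 S.2.2)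
  right_inv := runnerCount_abacusSet

end Abacus

section AbacusHead

variable {T k : ℕ} {n : Fin T → ℕ}

/-- The largest part of the partition whose `(T + 1)`-abacus is `n`. -/
def abacusHead (T : ℕ) (n : Fin T → ℕ) : ℕ := (abacusSet T n).sup (· + 1) - ∑ r, n r

theorem abacusHead_le_iff :
    abacusHead T n ≤ k ↔ ∀ r : Fin T, ∀ j < n r, bead T r j < k + ∑ r, n r := by
  rw [abacusHead, Nat.sub_le_iff_le_add', Finset.sup_le_iff]
  simp only [mem_abacusSet, forall_exists_index, and_imp, Nat.add_one_le_iff, add_comm k]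
  exact ⟨fun h r j hj => h _ r j hj rfl, fun h _ r j hj hx => hx ▸ h r j hj⟩

theorem abacusHead_eq_of_bead {r : Fin T} {j : ℕ} (hj : j < n r)
    (htop : bead T r j + 1 = k + ∑ r, n r) (hle : abacusHead T n ≤ k) : abacusHead T n = k := by
  have := le_sup (f := (· + 1)) (mem_abacusSet.2 ⟨r, j, hj, rfl⟩)
  rw [abacusHead] at hle ⊢
  omega

theorem exists_top_bead (hk : 0 < k) (h : abacusHead T n = k) :
    ∃ r : Fin T, ∃ q, n r = q + 1 ∧ bead T r q + 1 = k + ∑ r, n r := by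
  have hsup : (abacusSet T n).sup (· + 1) = k + ∑ r, n r := by
    rw [abacusHead] at h
    omega
  have hne : (abacusSet T n).Nonempty := by
    rw [nonempty_iff_ne_empty]
    rintro hempty
    rw [hempty, sup_empty] at hsup
    exact (hk.trans_le le_self_add).ne hsup
  obtain ⟨x, hx, hxsup⟩ := exists_mem_eq_sup _ hne (· + 1)
  obtain ⟨r, q, hq, rfl⟩ := mem_abacusSet.1 hx
  refine ⟨r, q, le_antisymm ?_ hq, hxsup ▸ hsup⟩
  by_contra! hlt
  have := abacusHead_le_iff.1 h.le r (q + 1) hlt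
  rw [bead_add] at this
  omega

end AbacusHead

def coreEquiv (T : ℕ) : {l : List ℕ // IsPartition l ∧ IsCore (T + 1) l} ≃ (Fin T → ℕ) :=
  (Equiv.subtypeSubtypeEquivSubtypeInter IsPartition (IsCore (T + 1))).symm
    |>.trans (betaSetEquiv.subtypeEquiv fun l => isCore_iff_subClosed l.2.1 _)
    |>.trans (Equiv.subtypeSubtypeEquivSubtypeInter (0 ∉ ·) (SubClosed (T + 1)))
    |>.trans (abacusEquiv T)

theorem betaSet_coreEquiv_symm (T : ℕ) (n : Fin T → ℕ) :
    betaSet ((coreEquiv T).symm n).1 = abacusSet T n :=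
  betaSet_ofBetaSet _

theorem headD_eq_abacusHead {T : ℕ} (l : {l : List ℕ // IsPartition l ∧ IsCore (T + 1) l}) :
    l.1.headD 0 = abacusHead T (coreEquiv T l) := by
  have h := betaSet_coreEquiv_symm T (coreEquiv T l)
  rw [Equiv.symm_apply_apply] at h
  rw [abacusHead, ← card_abacusSet, ← h, ← headD_add_card_betaSet l.2.1.1, Nat.add_sub_cancel]

def coreEquivOfHead (T : ℕ) (p : ℕ → Prop) :
    {l : List ℕ // IsPartition l ∧ IsCore (T + 1) l ∧ p (l.headD 0)} ≃
      {n : Fin T → ℕ // p (abacusHead T n)} :=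
  (Equiv.subtypeEquivRight fun _ => and_assoc.symm)
    |>.trans (Equiv.subtypeSubtypeEquivSubtypeInter _ (fun l => p (l.headD 0))).symm
    |>.trans ((coreEquiv T).subtypeEquiv fun l => by rw [headD_eq_abacusHead])

section RemoveRunner

variable {M k : ℕ}

theorem bead_succAbove_lt_iff (c : Fin (M + 1)) (s : Fin M) (j q : ℕ) :
    bead (M + 1) (c.succAbove s) j < bead (M + 1) c q ↔ bead M s j < bead M c q := by
  have hsa : (c.succAbove s : ℕ) < c ↔ (s : ℕ) < c := by
    rw [← Fin.lt_def, Fin.succAbove_lt_iff_castSucc_lt, Fin.lt_def, Fin.val_castSucc]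
  rw [bead_lt_bead_iff (c.succAbove s).2 c.2.le, bead_lt_bead_iff s.2 (Nat.lt_succ_iff.1 c.2), hsa]

/-- The runner of the largest bead `k + ∑ r, n r - 1` when the largest part is `k`. -/
def removedRunner (M k : ℕ) (n : Fin (M + 1) → ℕ) : Fin (M + 1) :=
  Fin.ofNat (M + 1) (runnerOf (M + 1) (k + ∑ r, n r - 1))

theorem removedRunner_eq {n : Fin (M + 1) → ℕ} {c : Fin (M + 1)} {q : ℕ}
    (htop : bead (M + 1) c q + 1 = k + ∑ r, n r) : removedRunner M k n = c := by
  rw [removedRunner, ← htop, Nat.add_sub_cancel, runnerOf_bead q c.2.le]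
  exact Fin.ext (by rw [Fin.val_ofNat, Nat.mod_eq_of_lt c.2])

def insertedRunner (M k : ℕ) (m : Fin M → ℕ) : Fin (M + 1) :=
  ⟨runnerOf M (k + ∑ s, m s), Nat.lt_succ_of_le (runnerOf_le _ _)⟩

theorem insertedRunner_eq {m : Fin M → ℕ} {c : Fin (M + 1)} {q : ℕ}
    (hN : bead M c q = k + ∑ s, m s) : insertedRunner M k m = c :=
  Fin.ext (by
    change runnerOf M (k + ∑ s, m s) = c
    rw [← hN, runnerOf_bead q (Nat.lt_succ_iff.1 c.2)])

theorem bead_insertedRunner (hk : 0 < k) (m : Fin M → ℕ) :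
    bead M (insertedRunner M k m) (levelOf M (k + ∑ s, m s)) = k + ∑ s, m s :=
  bead_runnerOf_levelOf (by omega)

theorem removeNth_of_top {n : Fin (M + 1) → ℕ} {c : Fin (M + 1)} {q : ℕ} (hc : n c = q + 1)
    (htop : bead (M + 1) c q + 1 = k + ∑ r, n r) (hle : abacusHead (M + 1) n ≤ k) :
    bead M c q = k + ∑ s, c.removeNth n s ∧ abacusHead M (c.removeNth n) ≤ k := by
  have hsum : ∑ r, n r = q + 1 + ∑ s, c.removeNth n s := by
    rw [Fin.sum_univ_succAbove n c, hc]
    rfl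
  have hN : bead M c q = k + ∑ s, c.removeNth n s := by
    have : q * (M + 1 + 1) = q * (M + 1) + q := by ring
    simp only [bead] at htop ⊢
    omega
  refine ⟨hN, abacusHead_le_iff.2 fun s j hj => hN.symm ▸ ?_⟩
  have hlt := abacusHead_le_iff.1 hle (c.succAbove s) j hj
  have hne : bead (M + 1) (c.succAbove s) j ≠ bead (M + 1) c q := fun h =>
    c.succAbove_ne s (Fin.ext (by
      simpa only [runnerOf_bead _ (c.succAbove s).2.le, runnerOf_bead _ c.2.le] using
        congrArg (runnerOf (M + 1)) h))
  exact (bead_succAbove_lt_iff c s j q).1 (lt_of_le_of_ne (by omega) hne)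

theorem insertNth_of_top {m : Fin M → ℕ} {c : Fin (M + 1)} {q : ℕ}
    (hN : bead M c q = k + ∑ s, m s) (hle : abacusHead M m ≤ k) :
    bead (M + 1) c q + 1 = k + ∑ r, c.insertNth (q + 1) m r ∧
      abacusHead (M + 1) (c.insertNth (q + 1) m) = k := by
  have hsum : ∑ r, c.insertNth (q + 1) m r = q + 1 + ∑ s, m s := by
    simp [Fin.sum_univ_succAbove _ c]
  have htop : bead (M + 1) c q + 1 = k + ∑ r, c.insertNth (q + 1) m r := by
    have : q * (M + 1 + 1) = q * (M + 1) + q := by ring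
    simp only [bead] at hN ⊢
    omega
  refine ⟨htop, abacusHead_eq_of_bead (by simp) htop (abacusHead_le_iff.2 fun r j hj => ?_)⟩
  rw [← htop, Nat.lt_succ_iff]
  rcases Fin.eq_self_or_eq_succAbove c r with rfl | ⟨s, rfl⟩
  · simp only [Fin.insertNth_apply_same] at hj
    exact (bead_strictMono _ _).monotone (Nat.lt_succ_iff.1 hj)
  · simp only [Fin.insertNth_apply_succAbove] at hj
    exact ((bead_succAbove_lt_iff c s j q).2 (hN ▸ abacusHead_le_iff.1 hle s j hj)).le

def removeTopRunner (hk : 0 < k) :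
    {n : Fin (M + 1) → ℕ // abacusHead (M + 1) n = k} ≃ {m : Fin M → ℕ // abacusHead M m ≤ k} where
  toFun n := ⟨(removedRunner M k n).removeNth n.1, by
    obtain ⟨c, q, hc, htop⟩ := exists_top_bead hk n.2
    rw [removedRunner_eq htop]
    exact (removeNth_of_top hc htop n.2.le).2⟩
  invFun m := ⟨(insertedRunner M k m).insertNth (levelOf M (k + ∑ s, m.1 s) + 1) m.1,
    (insertNth_of_top (bead_insertedRunner hk m.1) m.2).2⟩
  left_inv n := by
    obtain ⟨c, q, hc, htop⟩ := exists_top_bead hk n.2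
    have hN := (removeNth_of_top hc htop n.2.le).1
    apply Subtype.ext
    simp only [removedRunner_eq htop, insertedRunner_eq hN, ← hN,
      levelOf_bead q (Nat.lt_succ_iff.1 c.2), ← hc, Fin.insertNth_self_removeNth]
  right_inv m := by
    have htop := (insertNth_of_top (bead_insertedRunner hk m.1) m.2).1
    apply Subtype.ext
    simp only [removedRunner_eq htop, Fin.removeNth_insertNth]

end RemoveRunner

end CoreBijection

open CoreBijection in
/-- For ℓ ≥ 2 and k ≥ 1 there is a bijection between ℓ-cores with largest part
equal to k and (ℓ-1)-cores with largest part at most k. -/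
theorem stmt2 (ℓ k : ℕ) (hℓ : 2 ≤ ℓ) (hk : 0 < k) :
    Nonempty ({l : List ℕ // IsPartition l ∧ IsCore ℓ l ∧ l.headD 0 = k} ≃
              {l : List ℕ // IsPartition l ∧ IsCore (ℓ - 1) l ∧ l.headD 0 ≤ k}) := by
  obtain ⟨M, rfl⟩ : ∃ M, ℓ = M + 2 := ⟨ℓ - 2, by omega⟩
  exact ⟨(coreEquivOfHead (M + 1) (· = k)).trans
    ((removeTopRunner hk).trans (coreEquivOfHead M (· ≤ k)).symm)⟩
end

section
/- The number of ℓ-cores with largest part equal to k is the binomial coefficient C(k+ℓ−2, k). -/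
/-!
A partition `λ` with `r` rows is determined by its beta-set `{β_a = λ_a + r - 1 - a}` of
first-column hook lengths, and the hook lengths in row `a` are the numbers `β_a - γ` with
`γ < β_a` outside the beta-set. Hence `λ` is an `ℓ`-core iff its beta-set is closed under
stepping down by `ℓ` and avoids `0`: it is an `ℓ`-abacus whose `0`-runner is empty, given by the
bead counts `n₁, …, n_{ℓ-1}` of the other runners. If `N = max nⱼ` is attained last at `t`, the
largest part is `ℓ N - #{j > t} - ∑ nⱼ`. Reflecting the counts about `N` is an involution turning
this quantity into the plain sum, so `ℓ`-cores with largest part `k` correspond to compositions of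
`k` into `ℓ - 1` parts, of which there are `C(k + ℓ - 2, k)`.
-/

open Finset

def beta (l : List ℕ) (a : ℕ) : ℕ := l.getD a 0 + (l.length - 1 - a)

def betaSet (l : List ℕ) : Finset ℕ := (range l.length).image (beta l)

def legLength (l : List ℕ) (a c : ℕ) : ℕ := #{i ∈ Ioo a l.length | c ≤ l.getD i 0}

def largestPartOfBetaSet (B : Finset ℕ) : ℕ := B.sup id - (#B - 1)

def ModClosed (ℓ : ℕ) (B : Finset ℕ) : Prop := ∀ β ∈ B, ∀ γ < β, γ ≡ β [MOD ℓ] → γ ∈ B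

section BetaSet

variable {l : List ℕ} {a c i : ℕ}

lemma mem_betaSet {x : ℕ} : x ∈ betaSet l ↔ ∃ a < l.length, beta l a = x := by
  simp [betaSet]

lemma hook_eq_add_legLength (l : List ℕ) (a c : ℕ) :
    hook l a c = (l.getD a 0 - c) + legLength l a c + 1 := by
  have : {i ∈ range l.length | a < i ∧ c ≤ l.getD i 0} = {i ∈ Ioo a l.length | c ≤ l.getD i 0} := by
    ext i; simp only [mem_filter, mem_range, mem_Ioo]; tauto
  rw [hook, legLength, ← this]
  rfl

lemma hook_strictAntiOn (l : List ℕ) (a : ℕ) : StrictAntiOn (hook l a) (Set.Iic (l.getD a 0)) := by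
  intro c _ c' hc' hcc'
  have : legLength l a c' ≤ legLength l a c :=
    card_le_card (monotone_filter_right _ fun j _ hj => hcc'.le.trans hj)
  rw [Set.mem_Iic] at hc'
  rw [hook_eq_add_legLength, hook_eq_add_legLength]
  omega

lemma List.getElem_add_sub_le_of_pairwise_gt {b : List ℕ} (hb : b.Pairwise (· > ·)) {i j : ℕ}
    (hij : i ≤ j) (hj : j < b.length) : b[j] + (j - i) ≤ b[i] := by
  induction j, hij using Nat.le_induction with
  | base => simp
  | succ j hij ih =>
    have := List.pairwise_iff_getElem.1 hb j (j + 1) (by omega) hj (by omega)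
    have := ih (by omega)
    omega

def ofBetaSet (B : Finset ℕ) : List ℕ := (B.sort (· ≥ ·)).mapIdx fun a β => β - (#B - 1 - a)

section OfBetaSet

variable {B : Finset ℕ}

lemma length_ofBetaSet : (ofBetaSet B).length = #B := by
  rw [ofBetaSet, List.length_mapIdx, length_sort]

lemma getElem_ofBetaSet (ha : a < (ofBetaSet B).length) :
    (ofBetaSet B)[a] = (B.sort (· ≥ ·))[a]'(by rwa [length_sort, ← length_ofBetaSet]) -
      (#B - 1 - a) :=
  List.getElem_mapIdx

lemma card_sub_le_getElem_sort (h0 : 0 ∉ B) (ha : a < #B) :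
    #B - a ≤ (B.sort (· ≥ ·))[a]'(by rwa [length_sort]) := by
  have hlast : (B.sort (· ≥ ·))[#B - 1]'(by rw [length_sort]; omega) ≠ 0 := fun h =>
    h0 (h ▸ (mem_sort _).1 (List.getElem_mem _))
  have := List.getElem_add_sub_le_of_pairwise_gt (sortedGT_sort B).pairwise
    (i := a) (j := #B - 1) (by omega) (by rw [length_sort]; omega)
  omega

lemma beta_ofBetaSet (h0 : 0 ∉ B) (ha : a < #B) :
    beta (ofBetaSet B) a = (B.sort (· ≥ ·))[a]'(by rwa [length_sort]) := by
  have := card_sub_le_getElem_sort h0 ha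
  have hlen : (ofBetaSet B).length = #B := length_ofBetaSet
  rw [beta, List.getD_eq_getElem _ _ (by rwa [hlen]), getElem_ofBetaSet]
  omega

lemma isPartition_ofBetaSet (h0 : 0 ∉ B) : IsPartition (ofBetaSet B) := by
  refine ⟨List.pairwise_iff_getElem.2 fun i j hi hj hij => ?_, fun x hx => ?_⟩
  · rw [length_ofBetaSet] at hi hj
    have := List.getElem_add_sub_le_of_pairwise_gt (sortedGT_sort B).pairwise hij.le
      (by rwa [length_sort])
    have := card_sub_le_getElem_sort h0 hj
    rw [getElem_ofBetaSet, getElem_ofBetaSet]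
    omega
  · obtain ⟨a, ha, rfl⟩ := List.getElem_of_mem hx
    have ha' := ha
    rw [length_ofBetaSet] at ha'
    have := card_sub_le_getElem_sort h0 ha'
    rw [getElem_ofBetaSet]
    omega

lemma betaSet_ofBetaSet (h0 : 0 ∉ B) : betaSet (ofBetaSet B) = B := by
  ext x
  rw [mem_betaSet, length_ofBetaSet, ← mem_sort (· ≥ ·), List.mem_iff_getElem]
  constructor
  · rintro ⟨a, ha, rfl⟩
    exact ⟨a, by rwa [length_sort], (beta_ofBetaSet h0 ha).symm⟩
  · rintro ⟨a, ha, rfl⟩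
    rw [length_sort] at ha
    exact ⟨a, ha, beta_ofBetaSet h0 ha⟩

end OfBetaSet

namespace IsPartition

variable (hl : IsPartition l)
include hl

lemma getD_pos (ha : a < l.length) : 0 < l.getD a 0 := by
  rw [List.getD_eq_getElem _ _ ha]
  exact hl.2 _ (List.getElem_mem ha)

lemma getD_le_getD (hai : a ≤ i) (hi : i < l.length) : l.getD i 0 ≤ l.getD a 0 := by
  rcases hai.eq_or_lt with rfl | hai
  · rfl
  rw [List.getD_eq_getElem _ _ hi, List.getD_eq_getElem _ _ (hai.trans hi)]
  exact List.pairwise_iff_getElem.1 hl.1 _ _ _ _ hai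

lemma beta_lt_beta (hai : a < i) (hi : i < l.length) : beta l i < beta l a := by
  have := hl.getD_le_getD hai.le hi
  unfold beta
  omega

lemma beta_injOn : Set.InjOn (beta l) (Set.Iio l.length) := by
  intro a ha i hi h
  by_contra hne
  rcases Nat.lt_or_gt_of_ne hne with hlt | hlt
  · exact (hl.beta_lt_beta hlt hi).ne' h
  · exact (hl.beta_lt_beta hlt ha).ne h

lemma card_betaSet : #(betaSet l) = l.length := by
  rw [betaSet, card_image_of_injOn (by simpa using hl.beta_injOn), card_range]

lemma zero_notMem_betaSet : 0 ∉ betaSet l := by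
  rw [mem_betaSet]
  rintro ⟨a, ha, h⟩
  have := hl.getD_pos ha
  unfold beta at h
  omega

lemma hook_le_beta (ha : a < l.length) (hc : 1 ≤ c) : hook l a c ≤ beta l a := by
  have hleg : legLength l a c ≤ l.length - a - 1 := by
    simpa [legLength] using card_le_card (filter_subset (c ≤ l.getD · 0) (Ioo a l.length))
  have := hl.getD_pos ha
  rw [hook_eq_add_legLength]
  unfold beta
  omega

lemma beta_sub_hook_notMem_betaSet (ha : a < l.length) (hc : 1 ≤ c) (hca : c ≤ l.getD a 0) :
    beta l a - hook l a c ∉ betaSet l := by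
  rw [mem_betaSet]
  rintro ⟨i, hi, hβ⟩
  have hhook := hook_eq_add_legLength l a c
  rcases le_or_gt i a with hia | hai
  · have := hl.getD_le_getD hia ha
    unfold beta at hβ
    omega
  have hle := hl.getD_le_getD hai.le hi
  unfold beta at hβ
  rcases le_or_gt c (l.getD i 0) with hci | hci
  · have hleg : i - a ≤ legLength l a c := by
      have hsub : Ioc a i ⊆ {j ∈ Ioo a l.length | c ≤ l.getD j 0} := fun j hj => by
        rw [mem_Ioc] at hj
        exact mem_filter.2 ⟨mem_Ioo.2 ⟨hj.1, hj.2.trans_lt hi⟩, hci.trans (hl.getD_le_getD hj.2 hi)⟩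
      simpa [legLength] using card_le_card hsub
    omega
  · have hleg : legLength l a c ≤ i - a - 1 := by
      have hsub : {j ∈ Ioo a l.length | c ≤ l.getD j 0} ⊆ Ioo a i := fun j hj => by
        rw [mem_filter, mem_Ioo] at hj
        refine mem_Ioo.2 ⟨hj.1.1, lt_of_not_ge fun hij => ?_⟩
        exact absurd (hj.2.trans (hl.getD_le_getD hij hj.1.2)) (not_le.2 hci)
      simpa [legLength] using card_le_card hsub
    have := hl.getD_pos hi
    omega

lemma card_image_beta_Ioo : #((Ioo a l.length).image (beta l)) = l.length - 1 - a := by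
  rw [card_image_of_injOn (hl.beta_injOn.mono fun i hi => (mem_Ioo.1 hi).2), Nat.card_Ioo]
  omega

lemma image_hook (ha : a < l.length) :
    (Icc 1 (l.getD a 0)).image (hook l a) =
      (range (beta l a) \ betaSet l).image (beta l a - ·) := by
  refine eq_of_subset_of_card_le ?_ ?_
  · simp only [subset_iff, mem_image, mem_Icc, mem_sdiff, mem_range]
    rintro _ ⟨c, ⟨hc, hca⟩, rfl⟩
    have hle := hl.hook_le_beta ha hc
    have hpos : 0 < hook l a c := by rw [hook_eq_add_legLength]; omega
    exact ⟨beta l a - hook l a c, ⟨by omega, hl.beta_sub_hook_notMem_betaSet ha hc hca⟩, by omega⟩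
  · have hbelow : (Ioo a l.length).image (beta l) ⊆ range (beta l a) ∩ betaSet l := by
      intro x hx
      obtain ⟨i, hi, rfl⟩ := mem_image.1 hx
      rw [mem_Ioo] at hi
      exact mem_inter.2 ⟨mem_range.2 (hl.beta_lt_beta hi.1 hi.2),
        mem_betaSet.2 ⟨i, hi.2, rfl⟩⟩
    calc #((range (beta l a) \ betaSet l).image (beta l a - ·))
        ≤ #(range (beta l a) \ (Ioo a l.length).image (beta l)) :=
          card_image_le.trans <| card_le_card <|
            sdiff_subset_sdiff le_rfl (hbelow.trans inter_subset_right)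
      _ = l.getD a 0 := by
          rw [card_sdiff_of_subset (hbelow.trans inter_subset_left), card_range,
            hl.card_image_beta_Ioo]
          unfold beta
          omega
      _ = #((Icc 1 (l.getD a 0)).image (hook l a)) := by
          rw [card_image_of_injOn ((hook_strictAntiOn l a).injOn.mono fun c hc => (mem_Icc.1 hc).2),
            Nat.card_Icc, Nat.add_sub_cancel]

lemma isCore_iff {ℓ : ℕ} : IsCore ℓ l ↔ ModClosed ℓ (betaSet l) := by
  have hrow : ∀ a < l.length, (∀ c, 1 ≤ c → c ≤ l.getD a 0 → ¬ ℓ ∣ hook l a c) ↔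
      ∀ γ < beta l a, γ ≡ beta l a [MOD ℓ] → γ ∈ betaSet l := by
    intro a ha
    have h := Finset.ext_iff.1 (hl.image_hook ha)
    simp only [mem_image, mem_Icc, mem_sdiff, mem_range] at h
    constructor
    · intro hcore γ hγ hmod
      by_contra hγB
      obtain ⟨c, ⟨hc, hca⟩, hceq⟩ := (h _).2 ⟨γ, ⟨hγ, hγB⟩, rfl⟩
      exact hcore c hc hca (hceq ▸ (Nat.modEq_iff_dvd' hγ.le).1 hmod)
    · intro hclosed c hc hca hdvd
      obtain ⟨γ, ⟨hγ, hγB⟩, hγeq⟩ := (h _).1 ⟨c, ⟨hc, hca⟩, rfl⟩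
      exact hγB (hclosed γ hγ ((Nat.modEq_iff_dvd' hγ.le).2 (hγeq ▸ hdvd)))
  constructor
  · intro hcore β hβ
    obtain ⟨a, ha, rfl⟩ := mem_betaSet.1 hβ
    exact (hrow a ha).1 (hcore a ha)
  · intro hclosed a ha
    exact (hrow a ha).2 (hclosed _ (mem_betaSet.2 ⟨a, ha, rfl⟩))

lemma sort_betaSet : (betaSet l).sort (· ≥ ·) = (List.range l.length).map (beta l) := by
  have hpair : ((List.range l.length).map (beta l)).Pairwise (· > ·) := by
    rw [List.pairwise_map, List.pairwise_iff_getElem]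
    intro i j hi hj hij
    simp only [List.getElem_range]
    exact hl.beta_lt_beta hij (by simpa using hj)
  have hset : betaSet l = ((List.range l.length).map (beta l)).toFinset := by
    ext x
    simp [mem_betaSet]
  rw [hset, List.toFinset_sort _ hpair.nodup]
  exact hpair.imp le_of_lt

lemma ofBetaSet_betaSet : ofBetaSet (betaSet l) = l := by
  refine List.ext_getElem (by rw [length_ofBetaSet, hl.card_betaSet]) fun a h h' => ?_
  rw [getElem_ofBetaSet]
  simp only [hl.sort_betaSet, List.getElem_map, List.getElem_range, hl.card_betaSet, beta,
    List.getD_eq_getElem _ _ h']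
  omega

lemma largestPartOfBetaSet_betaSet : largestPartOfBetaSet (betaSet l) = l.headD 0 := by
  rcases l with _ | ⟨x, t⟩
  · rfl
  have hsup : (betaSet (x :: t)).sup id = beta (x :: t) 0 := by
    refine le_antisymm (Finset.sup_le fun β hβ => ?_)
      (le_sup (f := id) (mem_betaSet.2 ⟨0, by simp, rfl⟩))
    obtain ⟨a, ha, rfl⟩ := mem_betaSet.1 hβ
    rcases Nat.eq_zero_or_pos a with rfl | hpos
    · rfl
    · exact (hl.beta_lt_beta hpos ha).le
  simp [largestPartOfBetaSet, hsup, hl.card_betaSet, beta]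

end IsPartition

end BetaSet

section ReflectMax

variable {ι : Type*} [Fintype ι] [LinearOrder ι] [Nonempty ι] (n : ι → ℕ)

def lastArgmax : ι :=
  ({i | n i = univ.sup n} : Finset ι).max' <| by
    obtain ⟨i, -, hi⟩ := exists_mem_eq_sup univ univ_nonempty n
    exact ⟨i, by simp [hi]⟩

lemma apply_lastArgmax : n (lastArgmax n) = univ.sup n :=
  (mem_filter.1 (max'_mem ({i | n i = univ.sup n} : Finset ι) _)).2

lemma apply_lt_sup_of_lastArgmax_lt {j : ι} (h : lastArgmax n < j) : n j < univ.sup n :=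
  (le_sup (mem_univ j)).lt_of_ne fun hj => h.not_ge (le_max' _ _ (by simp [hj]))

lemma lastArgmax_eq {m : ι → ℕ} {t : ι} (hle : ∀ j, m j ≤ m t) (hlt : ∀ j, t < j → m j < m t) :
    lastArgmax m = t := by
  have hsup : univ.sup m = m t := le_antisymm (Finset.sup_le fun j _ => hle j) (le_sup (mem_univ t))
  refine le_antisymm (not_lt.1 fun h => ?_) (le_max' _ _ (by simp [hsup]))
  exact (hlt _ h).ne (hsup ▸ apply_lastArgmax m)

/-- Entries right of the last maximum are reflected about `N - 1` rather than `N = univ.sup n`;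
this keeps the last maximum in place and makes the map an involution. -/
def reflectMax (j : ι) : ℕ :=
  if j < lastArgmax n then univ.sup n - n j
  else if j = lastArgmax n then univ.sup n
  else univ.sup n - 1 - n j

lemma reflectMax_le_lastArgmax (j : ι) : reflectMax n j ≤ reflectMax n (lastArgmax n) := by
  simp only [reflectMax, lt_irrefl, if_false, if_true]
  split_ifs <;> omega

lemma reflectMax_lt_of_lastArgmax_lt {j : ι} (h : lastArgmax n < j) :
    reflectMax n j < reflectMax n (lastArgmax n) := by
  have := apply_lt_sup_of_lastArgmax_lt n h
  simp only [reflectMax, lt_irrefl, h.not_gt, h.ne', if_false, if_true]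
  omega

lemma lastArgmax_reflectMax : lastArgmax (reflectMax n) = lastArgmax n :=
  lastArgmax_eq (reflectMax_le_lastArgmax n) fun _ => reflectMax_lt_of_lastArgmax_lt n

lemma sup_reflectMax : univ.sup (reflectMax n) = univ.sup n := by
  rw [← apply_lastArgmax, lastArgmax_reflectMax]
  simp [reflectMax]

lemma reflectMax_involutive : Function.Involutive (reflectMax (ι := ι)) := by
  intro n
  funext j
  have hle : n j ≤ univ.sup n := le_sup (mem_univ j)
  rcases lt_trichotomy j (lastArgmax n) with h | rfl | h
  · simp only [reflectMax, lastArgmax_reflectMax, sup_reflectMax, if_pos h]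
    omega
  · simp [reflectMax, lastArgmax_reflectMax, sup_reflectMax, apply_lastArgmax]
  · have := apply_lt_sup_of_lastArgmax_lt n h
    simp only [reflectMax, lastArgmax_reflectMax, sup_reflectMax, h.not_gt, h.ne', if_false]
    omega

lemma sum_reflectMax :
    ∑ j, reflectMax n j + ∑ j, n j + #{j | lastArgmax n < j} =
      (Fintype.card ι + 1) * univ.sup n := by
  have hpoint : ∀ j, reflectMax n j + n j + (if lastArgmax n < j then 1 else 0) =
      univ.sup n + (if lastArgmax n = j then univ.sup n else 0) := by
    intro j
    have hle : n j ≤ univ.sup n := le_sup (mem_univ j)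
    rcases lt_trichotomy j (lastArgmax n) with h | rfl | h
    · simp only [reflectMax, if_pos h, h.ne', h.not_gt, if_false]
      omega
    · simp [reflectMax, apply_lastArgmax]
    · have := apply_lt_sup_of_lastArgmax_lt n h
      simp only [reflectMax, h, h.not_gt, h.ne', h.ne, if_false, if_true]
      omega
  have hsum := Finset.sum_congr rfl fun j (_ : j ∈ univ) => hpoint j
  simp only [sum_add_distrib, sum_boole, sum_ite_eq, mem_univ, if_true, sum_const, card_univ,
    smul_eq_mul, Nat.cast_id] at hsum
  rw [hsum]
  ring

end ReflectMax

lemma Finset.eq_range_card_of_forall_lt_mem {s : Finset ℕ} (hs : ∀ q ∈ s, ∀ p < q, p ∈ s) :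
    s = range #s := by
  refine eq_of_subset_of_card_le (fun q hq => mem_range.2 ?_) (card_range _).le
  have : range (q + 1) ⊆ s := fun p hp => by
    rcases (Nat.lt_succ_iff.1 (mem_range.1 hp)).eq_or_lt with rfl | hpq
    exacts [hq, hs q hq p hpq]
  simpa using card_le_card this

lemma ModClosed.mem_iff_div_lt_card {ℓ : ℕ} {B : Finset ℕ} (hB : ModClosed ℓ B) (hℓ : 0 < ℓ)
    (x : ℕ) : x ∈ B ↔ x / ℓ < #{β ∈ B | β % ℓ = x % ℓ} := by
  set F := {β ∈ B | β % ℓ = x % ℓ}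
  have hdecomp : ∀ β ∈ F, x % ℓ + ℓ * (β / ℓ) = β := fun β hβ => by
    rw [← (mem_filter.1 hβ).2, Nat.mod_add_div]
  have hinj : Set.InjOn (· / ℓ) F := fun β hβ γ hγ h => by
    rw [← hdecomp β hβ, ← hdecomp γ hγ]
    exact congrArg _ (congrArg _ h)
  have hlower : ∀ q ∈ F.image (· / ℓ), ∀ p < q, p ∈ F.image (· / ℓ) := by
    simp only [mem_image, mem_filter, F]
    rintro _ ⟨β, ⟨hβ, hmod⟩, rfl⟩ p hp
    have hγ : x % ℓ + ℓ * p < β := by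
      have := Nat.mod_add_div β ℓ
      rw [hmod] at this
      nlinarith
    have hγmod : (x % ℓ + ℓ * p) % ℓ = x % ℓ := by rw [Nat.add_mul_mod_self_left, Nat.mod_mod]
    refine ⟨_, ⟨hB β hβ _ hγ (hγmod.trans hmod.symm), hγmod⟩, ?_⟩
    exact ((Nat.div_mod_unique hℓ).2 ⟨rfl, Nat.mod_lt x hℓ⟩).1
  have hmem : x ∈ B ↔ x / ℓ ∈ F.image (· / ℓ) := by
    refine ⟨fun hx => mem_image_of_mem _ (mem_filter.2 ⟨hx, rfl⟩), fun hx => ?_⟩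
    obtain ⟨β, hβ, hβx⟩ := mem_image.1 hx
    have : β = x := by rw [← hdecomp β hβ, hβx, Nat.mod_add_div]
    exact this ▸ (mem_filter.1 hβ).1
  rw [hmem, eq_range_card_of_forall_lt_mem hlower, mem_range, card_image_of_injOn hinj]

section Abacus

variable {m : ℕ}

/-- Runner `i` is the residue class of `i + 1` mod `m + 1`; the class of `0` carries no bead. -/
def abacus (m : ℕ) (n : Fin m → ℕ) : Finset ℕ :=
  univ.biUnion fun i => (range (n i)).image fun q => i + 1 + (m + 1) * q

def runnerCount (m : ℕ) (B : Finset ℕ) (i : Fin m) : ℕ := #{β ∈ B | β % (m + 1) = i + 1}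

lemma div_mod_runner (i : Fin m) (q : ℕ) :
    (i + 1 + (m + 1) * q) / (m + 1) = q ∧ (i + 1 + (m + 1) * q) % (m + 1) = i + 1 :=
  (Nat.div_mod_unique (by omega)).2 ⟨rfl, by omega⟩

lemma mem_abacus {n : Fin m → ℕ} {x : ℕ} :
    x ∈ abacus m n ↔ ∃ i : Fin m, x % (m + 1) = i + 1 ∧ x / (m + 1) < n i := by
  simp only [abacus, mem_biUnion, mem_univ, true_and, mem_image, mem_range]
  constructor
  · rintro ⟨i, q, hq, rfl⟩
    obtain ⟨hdiv, hmod⟩ := div_mod_runner i q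
    exact ⟨i, hmod, by rwa [hdiv]⟩
  · rintro ⟨i, hmod, hq⟩
    exact ⟨i, x / (m + 1), hq, by rw [← hmod, Nat.mod_add_div]⟩

lemma zero_notMem_abacus (n : Fin m → ℕ) : 0 ∉ abacus m n := by
  simp [mem_abacus]

lemma modClosed_abacus (n : Fin m → ℕ) : ModClosed (m + 1) (abacus m n) := by
  intro β hβ γ hγ hmod
  obtain ⟨i, hi, hq⟩ := mem_abacus.1 hβ
  exact mem_abacus.2 ⟨i, Eq.trans hmod hi, (Nat.div_le_div_right hγ.le).trans_lt hq⟩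

lemma runnerCount_abacus (n : Fin m → ℕ) : runnerCount m (abacus m n) = n := by
  funext i
  have hrunner : {β ∈ abacus m n | β % (m + 1) = i + 1} =
      (range (n i)).image fun q => i + 1 + (m + 1) * q := by
    ext x
    simp only [mem_filter, mem_abacus, mem_image, mem_range]
    constructor
    · rintro ⟨⟨j, hj, hq⟩, hi⟩
      obtain rfl : j = i := Fin.ext (by omega)
      exact ⟨x / (m + 1), hq, by rw [← hi, Nat.mod_add_div]⟩
    · rintro ⟨q, hq, rfl⟩
      obtain ⟨hdiv, hmod⟩ := div_mod_runner i q
      exact ⟨⟨i, hmod, by rwa [hdiv]⟩, hmod⟩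
  rw [runnerCount, hrunner, card_image_of_injective _ fun q q' h => by simpa using h, card_range]

lemma abacus_runnerCount {B : Finset ℕ} (h0 : 0 ∉ B) (hB : ModClosed (m + 1) B) :
    abacus m (runnerCount m B) = B := by
  ext x
  have hmem := hB.mem_iff_div_lt_card (by omega : 0 < m + 1) x
  rw [mem_abacus]
  constructor
  · rintro ⟨i, hi, hq⟩
    rwa [hmem, hi]
  · intro hx
    have hxpos : 0 < x := Nat.pos_of_ne_zero fun h => h0 (h ▸ hx)
    have hres : x % (m + 1) ≠ 0 := fun h =>
      h0 (hB x hx 0 hxpos (by rw [Nat.ModEq, h, Nat.zero_mod]))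
    have hlt : x % (m + 1) < m + 1 := Nat.mod_lt x (by omega)
    refine ⟨⟨x % (m + 1) - 1, by omega⟩, by simp only; omega, ?_⟩
    rw [runnerCount, show x % (m + 1) - 1 + 1 = x % (m + 1) by omega, ← hmem]
    exact hx

lemma card_abacus (n : Fin m → ℕ) : #(abacus m n) = ∑ i, n i := by
  rw [abacus, card_biUnion]
  · refine sum_congr rfl fun i _ => ?_
    rw [card_image_of_injective _ fun q q' h => by simpa using h, card_range]
  · intro i _ j _ hij
    refine disjoint_left.2 fun x hxi hxj => hij (Fin.ext ?_)
    obtain ⟨q, -, rfl⟩ := mem_image.1 hxi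
    obtain ⟨q', -, hq'⟩ := mem_image.1 hxj
    have := (div_mod_runner i q).2
    rw [← hq', (div_mod_runner j q').2] at this
    omega

variable [NeZero m] (n : Fin m → ℕ)

lemma sup_abacus (hn : univ.sup n ≠ 0) :
    (abacus m n).sup id = lastArgmax n + 1 + (m + 1) * (univ.sup n - 1) := by
  have hlast := apply_lastArgmax n
  refine le_antisymm (Finset.sup_le fun x hx => ?_) (le_sup (f := id) ?_)
  · obtain ⟨j, -, q, hq, rfl⟩ : ∃ j ∈ univ, ∃ q < n j, j + 1 + (m + 1) * q = x := by
      simpa [abacus] using hx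
    have hj : n j ≤ univ.sup n := le_sup (mem_univ j)
    show j + 1 + (m + 1) * q ≤ _
    rcases le_or_gt j (lastArgmax n) with hjt | htj
    · have : (m + 1) * q ≤ (m + 1) * (univ.sup n - 1) := Nat.mul_le_mul_left _ (by omega)
      have := Fin.le_iff_val_le_val.1 hjt
      omega
    · have := apply_lt_sup_of_lastArgmax_lt n htj
      have : (m + 1) * (q + 1) ≤ (m + 1) * (univ.sup n - 1) := Nat.mul_le_mul_left _ (by omega)
      have := j.isLt
      nlinarith
  · refine mem_abacus.2 ⟨lastArgmax n, (div_mod_runner _ _).2, ?_⟩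
    rw [(div_mod_runner _ _).1]
    omega

lemma largestPartOfBetaSet_abacus_add :
    largestPartOfBetaSet (abacus m n) + ∑ i, n i + #{j | lastArgmax n < j} =
      (m + 1) * univ.sup n := by
  rcases Nat.eq_zero_or_pos (univ.sup n) with hN | hN
  · have hempty : abacus m n = ∅ := by
      rw [← card_eq_zero, card_abacus]
      exact sum_eq_zero fun i _ => Nat.le_zero.1 (hN ▸ le_sup (mem_univ i))
    have hright : #{j | lastArgmax n < j} = 0 := card_eq_zero.2 <| filter_eq_empty_iff.2
      fun j _ h => by simpa [hN] using apply_lt_sup_of_lastArgmax_lt n h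
    rw [hright, hN, ← card_abacus, hempty]
    rfl
  · have hcard : #(abacus m n) ≤ (abacus m n).sup id := by
      have : abacus m n ⊆ Icc 1 ((abacus m n).sup id) := fun x hx =>
        mem_Icc.2 ⟨Nat.pos_of_ne_zero fun h => zero_notMem_abacus n (h ▸ hx), le_sup (f := id) hx⟩
      simpa using card_le_card this
    have hmul : (m + 1) * univ.sup n = (m + 1) * (univ.sup n - 1) + (m + 1) := by
      rw [← Nat.mul_succ]; congr; omega
    have hcard_pos : n (lastArgmax n) ≤ #(abacus m n) :=
      card_abacus n ▸ single_le_sum (fun i _ => Nat.zero_le (n i)) (mem_univ _)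
    have := (lastArgmax n).isLt
    rw [apply_lastArgmax n] at hcard_pos
    rw [sup_abacus n hN.ne'] at hcard
    rw [largestPartOfBetaSet, sup_abacus n hN.ne', ← card_abacus, filter_lt_eq_Ioi, Fin.card_Ioi,
      hmul]
    generalize (m + 1) * (univ.sup n - 1) = P at hcard ⊢
    omega

end Abacus

lemma sum_reflectMax_eq_largestPartOfBetaSet_abacus {m : ℕ} [NeZero m] (n : Fin m → ℕ) :
    ∑ j, reflectMax n j = largestPartOfBetaSet (abacus m n) := by
  have h := sum_reflectMax n
  rw [Fintype.card_fin, ← largestPartOfBetaSet_abacus_add n] at h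
  omega

def coreEquivAbacus (m k : ℕ) :
    {l : List ℕ | IsPartition l ∧ IsCore (m + 1) l ∧ l.headD 0 = k} ≃
      {n : Fin m → ℕ // largestPartOfBetaSet (abacus m n) = k} where
  toFun l := ⟨runnerCount m (betaSet l), by
    obtain ⟨hl, hcore, hk⟩ := l.2
    rw [abacus_runnerCount hl.zero_notMem_betaSet (hl.isCore_iff.1 hcore),
      hl.largestPartOfBetaSet_betaSet, hk]⟩
  invFun n := ⟨ofBetaSet (abacus m n), by
    have hpart := isPartition_ofBetaSet (zero_notMem_abacus n.1)
    have hbeta := betaSet_ofBetaSet (zero_notMem_abacus n.1)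
    refine ⟨hpart, hpart.isCore_iff.2 (by rw [hbeta]; exact modClosed_abacus n.1), ?_⟩
    rw [← hpart.largestPartOfBetaSet_betaSet, hbeta]
    exact n.2⟩
  left_inv l := by
    obtain ⟨hl, hcore, -⟩ := l.2
    ext1
    simp only
    rw [abacus_runnerCount hl.zero_notMem_betaSet (hl.isCore_iff.1 hcore), hl.ofBetaSet_betaSet]
  right_inv n := by
    ext1
    simp only
    rw [betaSet_ofBetaSet (zero_notMem_abacus _), runnerCount_abacus]

/-- The number of ℓ-cores with largest part equal to k is C(k+ℓ-2, k). -/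
theorem stmt3 (ℓ k : ℕ) (hℓ : 2 ≤ ℓ) :
    {l : List ℕ | IsPartition l ∧ IsCore ℓ l ∧ l.headD 0 = k}.ncard =
      Nat.choose (k + ℓ - 2) k := by
  obtain ⟨m, rfl⟩ : ∃ m, ℓ = m + 1 := ⟨ℓ - 1, by omega⟩
  have : NeZero m := ⟨by omega⟩
  have hreflect : {n : Fin m → ℕ // largestPartOfBetaSet (abacus m n) = k} ≃
      {x : Fin m → ℕ // ∑ i, x i = k} :=
    (reflectMax_involutive.toPerm _).subtypeEquiv fun n => by
      rw [Function.Involutive.coe_toPerm, sum_reflectMax_eq_largestPartOfBetaSet_abacus]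
  rw [← Nat.card_coe_set_eq, Nat.card_congr ((coreEquivAbacus m k).trans
    (hreflect.trans (Sym.equivNatSumOfFintype (Fin m) k).symm)), Sym.natCard_sym_eq_choose,
    Nat.card_fin]
  congr 1
  omega
end

section
/- If λ is an ℓ-core and the rightmost box of the bottom row has residue i, then λ has no row whose rightmost box has residue i−1 mod ℓ. -/
/-- Residue (mod ℓ) of the content of the rightmost box of the bottom row. -/
def bottomRes (ℓ : ℕ) (l : List ℕ) : ℤ := ((l.getD (l.length - 1) 0 : ℤ) - l.length) % ℓ

/-- Remove one box from each row whose rightmost box has the residue of the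
bottom row's rightmost box, dropping rows that become empty. -/
def removeRes (ℓ : ℕ) (l : List ℕ) : List ℕ :=
  ((List.range l.length).map (fun a =>
    if ((l.getD a 0 : ℤ) - (a + 1)) % ℓ = bottomRes ℓ l
    then l.getD a 0 - 1 else l.getD a 0)).filter (fun x => decide (0 < x))

namespace Stmt5Aux

def bnum (l : List ℕ) (j : ℕ) : ℕ := l.getD j 0 + (l.length - 1 - j)

lemma filter_range_card (m : ℕ) (p : ℕ → Prop) [DecidablePred p] :
    ((List.range m).filter (fun i => decide (p i))).length = ((Finset.range m).filter p).card := by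
  simp [Finset.range, Finset.filter, Finset.card, Multiset.range]

lemma getD_le (l : List ℕ) (h : l.Pairwise (· ≥ ·)) {i j : ℕ} (hij : i ≤ j) (hj : j < l.length) :
    l.getD j 0 ≤ l.getD i 0 := by
  rw [List.getD_eq_getElem l 0 hj, List.getD_eq_getElem l 0 (lt_of_le_of_lt hij hj)]
  rcases eq_or_lt_of_le hij with rfl|hij
  · exact le_refl _
  · exact List.pairwise_iff_get.mp h ⟨i, _⟩ ⟨j, _⟩ hij

lemma getD_pos (l : List ℕ) (hp : IsPartition l) {j : ℕ} (hj : j < l.length) :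
    0 < l.getD j 0 := by
  rw [List.getD_eq_getElem l 0 hj]
  exact hp.2 _ (List.getElem_mem _)

lemma bnum_strict (l : List ℕ) (hp : IsPartition l) {i j : ℕ} (hij : i < j) (hj : j < l.length) :
    bnum l j + (j - i) ≤ bnum l i := by
  have := getD_le l hp.1 (le_of_lt hij) hj
  unfold bnum
  omega

lemma hook_one (l : List ℕ) (hp : IsPartition l) {a : ℕ} (ha : a < l.length) :
    hook l a 1 = bnum l a := by
  unfold hook bnum
  rw [filter_range_card l.length (fun i => a < i ∧ 1 ≤ l.getD i 0)]
  have h2 : (Finset.range l.length).filter (fun i => a < i ∧ 1 ≤ l.getD i 0)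
      = Finset.Ioo a l.length := by
    ext i
    simp only [Finset.mem_filter, Finset.mem_range, Finset.mem_Ioo]
    constructor
    · rintro ⟨h, h', _⟩; exact ⟨h', h⟩
    · rintro ⟨h', h⟩; exact ⟨h, h', getD_pos l hp h⟩
  rw [h2, Nat.card_Ioo]
  have := getD_pos l hp ha
  omega


lemma key (ℓ : ℕ) (l : List ℕ) (hp : IsPartition l) {a t : ℕ} (ha : a < l.length)
    (hℓ : 1 ≤ ℓ) (hb : bnum l a = t + ℓ)
    (hnot : ∀ j, a < j → j < l.length → bnum l j ≠ t) :
    ∃ c, 1 ≤ c ∧ c ≤ l.getD a 0 ∧ hook l a c = ℓ := by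
  set m := l.length with hm
  set k := ((Finset.Ioo a m).filter (fun j => t < bnum l j)).card with hk
  have hinj : ∀ s : Finset ℕ, (∀ j ∈ s, j < m) → Set.InjOn (bnum l) s := by
    intro s hs x hx y hy hxy
    by_contra hne
    rcases Nat.lt_or_ge x y with h|h
    · have := bnum_strict l hp h (hs y hy); omega
    · have hlt : y < x := lt_of_le_of_ne h (Ne.symm hne)
      have := bnum_strict l hp hlt (hs x hx); omega
  have hba : bnum l a = l.getD a 0 + (m - 1 - a) := rfl
  have hk_lt : k + 1 ≤ ℓ := by
    have hsub : k ≤ (Finset.Ioo t (t + ℓ)).card := by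
      apply Finset.card_le_card_of_injOn (bnum l)
      · intro j hj
        simp only [Finset.mem_coe, Finset.mem_filter, Finset.mem_Ioo] at hj ⊢
        have := bnum_strict l hp hj.1.1 hj.1.2
        omega
      · exact hinj _ (fun j hj => (Finset.mem_Ioo.mp (Finset.mem_filter.mp hj).1).2)
    rw [Nat.card_Ioo] at hsub
    omega
  have hF3 : m - 1 - a ≤ t + k := by
    have hcards := Finset.card_filter_add_card_filter_not
      (s := Finset.Ioo a m) (p := fun j => t < bnum l j)
    have hsub : ((Finset.Ioo a m).filter (fun j => ¬ t < bnum l j)).card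
        ≤ (Finset.range t).card := by
      apply Finset.card_le_card_of_injOn (bnum l)
      · intro j hj
        simp only [Finset.mem_coe, Finset.mem_filter, Finset.mem_Ioo, not_lt] at hj
        simp only [Finset.mem_coe, Finset.mem_range]
        have := hnot j hj.1.1 hj.1.2
        omega
      · exact hinj _ (fun j hj => (Finset.mem_Ioo.mp (Finset.mem_filter.mp hj).1).2)
    rw [Nat.card_Ioo] at hcards
    rw [Finset.card_range] at hsub
    omega
  set c := l.getD a 0 + 1 + k - ℓ with hcdef
  have hc1 : 1 ≤ c := by omega
  have hcle : c ≤ l.getD a 0 := by omega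
  have hcplus : c + ℓ = l.getD a 0 + 1 + k := by omega
  have hF4 : ∀ j, a < j → j < m → (c ≤ l.getD j 0 ↔ t < bnum l j) := by
    intro j haj hjm
    have hbj : bnum l j = l.getD j 0 + (m - 1 - j) := rfl
    constructor
    · intro hcj
      by_contra hN
      have hbjt : bnum l j < t :=
        lt_of_le_of_ne (not_lt.mp hN) (hnot j haj hjm)
      have h1 := Finset.card_filter_add_card_filter_not
        (s := Finset.Ioo a j) (p := fun j' => t < bnum l j')
      have h2 : ((Finset.Ioo a j).filter (fun j' => t < bnum l j')).card ≤ k := by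
        apply Finset.card_le_card
        intro x hx
        simp only [Finset.mem_filter, Finset.mem_Ioo] at hx ⊢
        exact ⟨⟨hx.1.1, lt_trans hx.1.2 hjm⟩, hx.2⟩
      have h3 : ((Finset.Ioo a j).filter (fun j' => ¬ t < bnum l j')).card
          ≤ (Finset.Ioo (bnum l j) t).card := by
        apply Finset.card_le_card_of_injOn (bnum l)
        · intro j' hj'
          simp only [Finset.mem_coe, Finset.mem_filter, Finset.mem_Ioo, not_lt] at hj'
          simp only [Finset.mem_coe, Finset.mem_Ioo]
          have hlt := bnum_strict l hp hj'.1.2 hjm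
          have hne := hnot j' hj'.1.1 (lt_trans hj'.1.2 hjm)
          omega
        · exact hinj _ (fun j' hj' =>
            lt_trans (Finset.mem_Ioo.mp (Finset.mem_filter.mp hj').1).2 hjm)
      rw [Nat.card_Ioo] at h1 h3
      omega
    · intro htj
      have hsub : ((Finset.Ioo a m).filter (fun j' => t < bnum l j'))
          ⊆ Finset.Ioc a j ∪ ((Finset.Ioo j m).filter (fun j' => t < bnum l j')) := by
        intro x hx
        simp only [Finset.mem_filter, Finset.mem_Ioo] at hx
        simp only [Finset.mem_union, Finset.mem_Ioc, Finset.mem_filter, Finset.mem_Ioo]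
        rcases le_or_gt x j with h|h
        · exact Or.inl ⟨hx.1.1, h⟩
        · exact Or.inr ⟨⟨h, hx.1.2⟩, hx.2⟩
      have h2 : ((Finset.Ioo j m).filter (fun j' => t < bnum l j')).card
          ≤ (Finset.Ioo t (bnum l j)).card := by
        apply Finset.card_le_card_of_injOn (bnum l)
        · intro j' hj'
          simp only [Finset.mem_coe, Finset.mem_filter, Finset.mem_Ioo] at hj' ⊢
          have := bnum_strict l hp hj'.1.1 hj'.1.2
          omega
        · exact hinj _ (fun j' hj' => (Finset.mem_Ioo.mp (Finset.mem_filter.mp hj').1).2)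
      have h1 : k ≤ (Finset.Ioc a j).card
          + ((Finset.Ioo j m).filter (fun j' => t < bnum l j')).card :=
        le_trans (Finset.card_le_card hsub) (Finset.card_union_le _ _)
      rw [Nat.card_Ioc] at h1
      rw [Nat.card_Ioo] at h2
      omega
  refine ⟨c, hc1, hcle, ?_⟩
  unfold hook
  rw [filter_range_card l.length (fun i => a < i ∧ c ≤ l.getD i 0)]
  have heq : (Finset.range l.length).filter (fun i => a < i ∧ c ≤ l.getD i 0)
      = (Finset.Ioo a m).filter (fun j => t < bnum l j) := by
    ext i
    simp only [Finset.mem_filter, Finset.mem_range, Finset.mem_Ioo, ← hm]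
    constructor
    · rintro ⟨him, hai, hci⟩; exact ⟨⟨hai, him⟩, (hF4 i hai him).mp hci⟩
    · rintro ⟨⟨hai, him⟩, ht⟩; exact ⟨him, hai, (hF4 i hai him).mpr ht⟩
  rw [heq, ← hk]
  omega


lemma abacus (ℓ : ℕ) (l : List ℕ) (hp : IsPartition l) (hc : IsCore ℓ l) (hℓ : 1 ≤ ℓ)
    {j : ℕ} (hj : j < l.length) (hbig : ℓ ≤ bnum l j) :
    ∃ j', j < j' ∧ j' < l.length ∧ bnum l j' + ℓ = bnum l j := by
  by_contra hno
  push_neg at hno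
  have hnot : ∀ j', j < j' → j' < l.length → bnum l j' ≠ bnum l j - ℓ := by
    intro j' h1 h2 heq
    have := hno j' h1 h2
    omega
  obtain ⟨c, hc1, hc2, hch⟩ := key ℓ l hp hj hℓ (t := bnum l j - ℓ) (by omega) hnot
  exact hc j hj c hc1 hc2 (hch ▸ dvd_refl ℓ)

lemma chain (ℓ : ℕ) (l : List ℕ) (hp : IsPartition l) (hc : IsCore ℓ l) (hℓ : 1 ≤ ℓ) :
    ∀ n, (∃ j, j < l.length ∧ bnum l j = n) → ∃ j, j < l.length ∧ bnum l j = n % ℓ := by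
  intro n
  induction n using Nat.strong_induction_on with
  | _ n ih =>
    rintro ⟨j, hj, hbj⟩
    by_cases h : n < ℓ
    · exact ⟨j, hj, by rw [Nat.mod_eq_of_lt h]; exact hbj⟩
    · obtain ⟨j', _, hj'm, heq⟩ := abacus ℓ l hp hc hℓ hj (by omega)
      have hmod : (n - ℓ) % ℓ = n % ℓ := by
        conv_rhs => rw [← Nat.sub_add_cancel (le_of_not_gt h)]
        rw [Nat.add_mod_right]
      rw [← hmod]
      exact ih (n - ℓ) (by omega) ⟨j', hj'm, by omega⟩

end Stmt5Aux


/-- If i is the residue of the bottom row's rightmost box of an ℓ-core, then no row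
has rightmost box of residue i - 1 (mod ℓ). -/
theorem stmt5 (ℓ : ℕ) (hℓ : 2 ≤ ℓ) (l : List ℕ)
    (hp : IsPartition l) (hc : IsCore ℓ l) (hne : l ≠ []) :
    ∀ a < l.length,
      ¬ (((l.getD a 0 : ℤ) - (a + 1)) % ℓ = (bottomRes ℓ l - 1) % ℓ) := by
  intro a ha h
  have hℓ1 : 1 ≤ ℓ := by omega
  have hm : 1 ≤ l.length := List.length_pos_iff.mpr hne
  have hmin : ∀ j, j < l.length →
      Stmt5Aux.bnum l (l.length - 1) ≤ Stmt5Aux.bnum l j := by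
    intro j hj
    rcases eq_or_lt_of_le (by omega : j ≤ l.length - 1) with rfl|hlt
    · exact le_refl _
    · have := Stmt5Aux.bnum_strict l hp hlt (by omega); omega
  have hbm : Stmt5Aux.bnum l (l.length - 1) = l.getD (l.length - 1) 0 := by
    unfold Stmt5Aux.bnum; omega
  have hbm1 : 1 ≤ Stmt5Aux.bnum l (l.length - 1) := by
    have := Stmt5Aux.getD_pos l hp (show l.length - 1 < l.length by omega); omega
  have hbmlt : Stmt5Aux.bnum l (l.length - 1) < ℓ := by
    by_contra hN
    obtain ⟨j', h1, h2, _⟩ := Stmt5Aux.abacus ℓ l hp hc hℓ1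
      (show l.length - 1 < l.length by omega) (le_of_not_gt hN)
    omega
  obtain ⟨j, hjm, hjr⟩ := Stmt5Aux.chain ℓ l hp hc hℓ1 (Stmt5Aux.bnum l a) ⟨a, ha, rfl⟩
  set r := Stmt5Aux.bnum l a % ℓ with hrdef
  have hrlt : r < ℓ := Nat.mod_lt _ (by omega)
  have hrge : Stmt5Aux.bnum l (l.length - 1) ≤ r := hjr ▸ hmin j hjm
  -- integer congruences
  unfold bottomRes at h
  have hB : ((l.getD (l.length - 1) 0 : ℤ) - l.length) % ℓ - 1
      ≡ ((l.getD (l.length - 1) 0 : ℤ) - l.length) - 1 [ZMOD ℓ] :=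
    Int.ModEq.sub_right 1 (Int.emod_emod_of_dvd _ dvd_rfl)
  have h2 : ((l.getD a 0 : ℤ) - (a+1))
      ≡ ((l.getD (l.length - 1) 0 : ℤ) - l.length) - 1 [ZMOD ℓ] := Int.ModEq.trans h hB
  have hd1 : (ℓ:ℤ) ∣ (((l.getD (l.length - 1) 0 : ℤ) - l.length) - 1)
      - ((l.getD a 0 : ℤ) - (a+1)) := Int.ModEq.dvd h2
  have hba : Stmt5Aux.bnum l a = l.getD a 0 + (l.length - 1 - a) := rfl
  have hcast1 : (Stmt5Aux.bnum l a : ℤ) = (l.getD a 0 : ℤ) + l.length - 1 - a := by omega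
  have hcast2 : (Stmt5Aux.bnum l (l.length - 1) : ℤ) = (l.getD (l.length - 1) 0 : ℤ) := by
    exact_mod_cast congrArg (Nat.cast : ℕ → ℤ) hbm
  have hd2 : (ℓ:ℤ) ∣ (Stmt5Aux.bnum l a : ℤ) - r := by
    apply Int.dvd_self_sub_of_emod_eq
    rw [hrdef]
    push_cast
    ring
  have hd3 : (ℓ:ℤ) ∣ ((r : ℤ) + 1 - Stmt5Aux.bnum l (l.length - 1)) := by
    have h' := dvd_add hd1 hd2
    have heq : (((l.getD (l.length - 1) 0 : ℤ) - l.length) - 1)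
        - ((l.getD a 0 : ℤ) - (a+1)) + ((Stmt5Aux.bnum l a : ℤ) - r)
        = (Stmt5Aux.bnum l (l.length - 1) : ℤ) - 1 - r := by
      rw [hcast1, hcast2]; ring
    rw [heq] at h'
    have := dvd_neg.mpr h'
    have heq2 : -((Stmt5Aux.bnum l (l.length - 1) : ℤ) - 1 - r)
        = (r : ℤ) + 1 - Stmt5Aux.bnum l (l.length - 1) := by ring
    rwa [heq2] at this
  have hfin := Int.le_of_dvd (by omega) hd3
  omega
end

section
/- Let λ be an ℓ-core with balanced flush abacus given by the root-lattice vector (a₁,...,a_ℓ) (a_i is the largest bead level on runner i−1, Σ a_i = 0). Let a_i be the rightmost occurrence of the maximum coordinate. Then the largest part of λ equals (a_i − 1)ℓ + i. -/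
/-- Bead positions of the flush abacus with ℓ runners whose largest bead level on
runner i is `a i`. -/
def Beads (ℓ : ℕ) (a : Fin ℓ → ℤ) : Set ℤ :=
  {x | ∃ i : Fin ℓ, ∃ r : ℤ, r ≤ a i ∧ x = r * ℓ + (i : ℤ)}

/-- The (doubly infinite) beta-number set of a partition: its first-column hook
lengths together with all negative integers. -/
def BetaSet (l : List ℕ) : Set ℤ :=
  {x | (∃ a < l.length, x = (hook l a 1 : ℤ)) ∨ x < 0}

/-- The abacus determined by `a` represents the partition `l`
(up to the normalizing shift `s`). -/
def Corresponds (ℓ : ℕ) (a : Fin ℓ → ℤ) (l : List ℕ) : Prop :=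
  ∃ s : ℤ, Beads ℓ a = (fun x => x + s) '' BetaSet l

/-!
A flush abacus and the beta-set of a partition both contain every sufficiently negative integer,
so they can be compared by counting the beads at or above a low cutoff `-K ℓ`: on the abacus
this count is `ℓ (K + 1) + ∑ aᵢ`, on the beta-set shifted by `s` it is
`K ℓ + s + (number of parts)`. Balance (`∑ aᵢ = 0`) thus forces `s = ℓ - (number of parts)`,
and then the largest bead is `λ₁ + ℓ - 1`. On the abacus the largest bead sits on the rightmost
runner of maximal level, at position `aᵢ ℓ + (i - 1)`.
-/
lemma length_filter_range_lt (b n : ℕ) :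
    ((List.range n).filter (fun i => decide (b < i))).length = n - (b + 1) := by
  induction n with
  | zero => simp
  | succ n ih =>
    rw [List.range_succ, List.filter_append, List.length_append, ih]
    by_cases h : b < n <;> simp [h] <;> omega

section Partition

variable {l : List ℕ}

lemma hook_one_eq (hpos : ∀ x ∈ l, 0 < x) {b : ℕ} (hb : b < l.length) :
    hook l b 1 = l.getD b 0 + (l.length - (b + 1)) := by
  have hrow : ∀ i < l.length, 0 < l.getD i 0 := fun i hi => by
    rw [List.getD_eq_getElem l 0 hi]
    exact hpos _ (List.getElem_mem hi)
  have hfilter : (List.range l.length).filter (fun i => decide (b < i ∧ 1 ≤ l.getD i 0))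
      = (List.range l.length).filter (fun i => decide (b < i)) := by
    refine List.filter_congr fun i hi => ?_
    have := hrow i (List.mem_range.mp hi)
    simp only [decide_eq_decide]
    omega
  unfold hook
  rw [hfilter, length_filter_range_lt]
  have := hrow b hb
  omega

lemma hook_one_strictAntiOn (hp : IsPartition l) :
    StrictAntiOn (fun b => hook l b 1) (Set.Iio l.length) := by
  intro b hb b' hb' hbb'
  rw [Set.mem_Iio] at hb hb'
  have hrows : l.getD b' 0 ≤ l.getD b 0 := by
    rw [List.getD_eq_getElem l 0 hb, List.getD_eq_getElem l 0 hb']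
    exact List.pairwise_iff_getElem.mp hp.1 b b' hb hb' hbb'
  simp only [hook_one_eq hp.2 hb, hook_one_eq hp.2 hb']
  omega

lemma isGreatest_betaSet (hp : IsPartition l) :
    IsGreatest (BetaSet l) ((l.headD 0 : ℤ) + l.length - 1) := by
  cases l with
  | nil =>
    refine ⟨Or.inr (by simp), ?_⟩
    rintro x (⟨b, hb, -⟩ | hx)
    · simp at hb
    · simp only [List.headD_nil, List.length_nil]
      omega
  | cons x t =>
    have hfirst : (hook (x :: t) 0 1 : ℤ) = x + (t.length + 1) - 1 := by
      rw [hook_one_eq hp.2 (by simp)]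
      push_cast [List.getD_cons_zero, List.length_cons, Nat.add_sub_cancel]
      ring
    simp only [List.headD_cons, List.length_cons, Nat.cast_add, Nat.cast_one]
    refine ⟨Or.inl ⟨0, by simp, hfirst.symm⟩, ?_⟩
    rintro y (⟨b, hb, rfl⟩ | hy)
    · rw [← hfirst, Nat.cast_le]
      exact (hook_one_strictAntiOn hp).antitoneOn (by simp) hb (Nat.zero_le b)
    · omega

lemma ncard_betaSet_inter_Ici (hp : IsPartition l) (m : ℕ) :
    (BetaSet l ∩ Set.Ici (-(m : ℤ))).ncard = m + l.length := by
  have hset : BetaSet l ∩ Set.Ici (-(m : ℤ)) =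
      ↑(Finset.Ico (-(m : ℤ)) 0 ∪ (Finset.range l.length).image (fun b => (hook l b 1 : ℤ))) := by
    ext x
    simp only [BetaSet, Set.mem_inter_iff, Set.mem_ofPred_eq, Set.mem_Ici, Finset.coe_union,
      Finset.coe_Ico, Finset.coe_image, Finset.coe_range, Set.mem_union, Set.mem_Ico,
      Set.mem_image, Set.mem_Iio]
    constructor
    · rintro ⟨⟨b, hb, rfl⟩ | hx, hm⟩
      · exact Or.inr ⟨b, hb, rfl⟩
      · exact Or.inl ⟨hm, hx⟩
    · rintro (⟨hm, hx⟩ | ⟨b, hb, rfl⟩)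
      · exact ⟨Or.inr hx, hm⟩
      · exact ⟨Or.inl ⟨b, hb, rfl⟩, by omega⟩
  have hdisj : Disjoint (Finset.Ico (-(m : ℤ)) 0)
      ((Finset.range l.length).image (fun b => (hook l b 1 : ℤ))) := by
    rw [Finset.disjoint_left]
    intro x hx hx'
    obtain ⟨b, -, rfl⟩ := Finset.mem_image.mp hx'
    have := (Finset.mem_Ico.mp hx).2
    omega
  have hinj : Set.InjOn (fun b => (hook l b 1 : ℤ)) (Finset.range l.length) := by
    rw [Finset.coe_range]
    exact Nat.cast_injective.comp_injOn (hook_one_strictAntiOn hp).injOn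
  rw [hset, Set.ncard_coe_finset, Finset.card_union_of_disjoint hdisj, Int.card_Ico,
    Finset.card_image_of_injOn hinj, Finset.card_range]
  simp

end Partition

section Abacus

variable {ℓ : ℕ} {a : Fin ℓ → ℤ}

lemma eq_and_eq_of_mul_add_eq {ℓ r r' j j' : ℤ} (hj : 0 ≤ j) (hjℓ : j < ℓ) (hj' : 0 ≤ j')
    (hj'ℓ : j' < ℓ) (h : r * ℓ + j = r' * ℓ + j') : r = r' ∧ j = j' := by
  have hℓ : 0 < ℓ := by omega
  obtain ⟨hq, hr⟩ := (Int.ediv_emod_unique hℓ).2 ⟨(by ring : j + ℓ * r = r * ℓ + j), hj, hjℓ⟩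
  obtain ⟨hq', hr'⟩ :=
    (Int.ediv_emod_unique hℓ).2 ⟨(by rw [h]; ring : j' + ℓ * r' = r * ℓ + j), hj', hj'ℓ⟩
  exact ⟨hq.symm.trans hq', hr.symm.trans hr'⟩

lemma beadPosition_injective :
    Function.Injective (fun p : (Σ _ : Fin ℓ, ℤ) => p.2 * ℓ + (p.1 : ℤ)) := by
  rintro ⟨j, r⟩ ⟨j', r'⟩ h
  obtain ⟨rfl, hj⟩ := eq_and_eq_of_mul_add_eq (by positivity) (by exact_mod_cast j.isLt)
    (by positivity) (by exact_mod_cast j'.isLt) h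
  obtain rfl : j = j' := Fin.ext (by exact_mod_cast hj)
  rfl

lemma ncard_beads_inter_Ici (K : ℤ) (hK : ∀ j, -K ≤ a j + 1) :
    ((Beads ℓ a ∩ Set.Ici (-(K * ℓ))).ncard : ℤ) = ∑ j, a j + ℓ * (K + 1) := by
  have hset : Beads ℓ a ∩ Set.Ici (-(K * ℓ)) =
      ↑((Finset.univ.sigma fun j => Finset.Icc (-K) (a j)).image
        (fun p : (Σ _ : Fin ℓ, ℤ) => p.2 * ℓ + (p.1 : ℤ))) := by
    ext x
    simp only [Beads, Set.mem_inter_iff, Set.mem_ofPred_eq, Set.mem_Ici, Finset.coe_image,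
      Finset.coe_sigma, Set.mem_image, Set.mem_sigma_iff, Finset.coe_univ, Set.mem_univ, Finset.coe_Icc,
      Set.mem_Icc, true_and, Sigma.exists]
    constructor
    · rintro ⟨⟨j, r, hr, rfl⟩, hx⟩
      have hjℓ : ((j : ℕ) : ℤ) < ℓ := by exact_mod_cast j.isLt
      exact ⟨j, r, ⟨by nlinarith, hr⟩, rfl⟩
    · rintro ⟨j, r, ⟨hKr, hr⟩, rfl⟩
      have hℓ : (0 : ℤ) ≤ ℓ := by positivity
      exact ⟨⟨j, r, hr, rfl⟩, by nlinarith⟩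
  rw [hset, Set.ncard_coe_finset, Finset.card_image_of_injective _ beadPosition_injective,
    Finset.card_sigma, Nat.cast_sum]
  calc ∑ j, ((Finset.Icc (-K) (a j)).card : ℤ) = ∑ j, (a j + (K + 1)) :=
        Finset.sum_congr rfl fun j _ => by
          rw [Int.card_Icc, Int.toNat_of_nonneg (by linarith [hK j])]
          ring
    _ = ∑ j, a j + ℓ * (K + 1) := by simp [Finset.sum_add_distrib]

lemma isGreatest_beads (i : Fin ℓ) (hmax : ∀ j, a j ≤ a i) (hright : ∀ j, i < j → a j < a i) :
    IsGreatest (Beads ℓ a) (a i * ℓ + i) := by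
  refine ⟨⟨i, a i, le_rfl, rfl⟩, ?_⟩
  rintro _ ⟨j, r, hr, rfl⟩
  have hℓ : (0 : ℤ) ≤ ℓ := by positivity
  have hjℓ : ((j : ℕ) : ℤ) < ℓ := by exact_mod_cast j.isLt
  rcases le_or_gt j i with hji | hij
  · have hji' : ((j : ℕ) : ℤ) ≤ i := by exact_mod_cast hji
    nlinarith [hmax j]
  · have hi : (0 : ℤ) ≤ (i : ℕ) := by positivity
    have := hright j hij
    nlinarith

variable {l : List ℕ}

lemma shift_eq_of_beads_eq_image (hℓ : 0 < ℓ) (ha : ∑ j, a j = 0) (hp : IsPartition l) {s : ℤ}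
    (hs : Beads ℓ a = (· + s) '' BetaSet l) : s = ℓ - l.length := by
  set K := ∑ j, |a j| + |s|
  have hK : ∀ j, -K ≤ a j + 1 := fun j => by
    have := Finset.single_le_sum (fun k _ => abs_nonneg (a k)) (Finset.mem_univ j)
    linarith [neg_abs_le (a j), abs_nonneg s]
  have hKs : -s ≤ K := by
    have : 0 ≤ ∑ j, |a j| := by positivity
    linarith [neg_abs_le s]
  have hKℓ : K ≤ K * ℓ := le_mul_of_one_le_right (by positivity) (by exact_mod_cast hℓ)
  obtain ⟨m, hm⟩ : ∃ m : ℕ, (m : ℤ) = K * ℓ + s :=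
    ⟨_, Int.toNat_of_nonneg (by linarith)⟩
  have hbeta : (Beads ℓ a ∩ Set.Ici (-(K * ℓ))).ncard = m + l.length := by
    rw [hs, ← Set.image_inter_preimage, Set.preimage_add_const_Ici,
      Set.ncard_image_of_injective _ (add_left_injective s), ← ncard_betaSet_inter_Ici hp m]
    congr 3
    omega
  have hbeads := ncard_beads_inter_Ici K hK
  rw [hbeta, ha] at hbeads
  push_cast at hbeads
  linear_combination hbeads - hm

end Abacus

theorem stmt7_general (ℓ : ℕ) (a : Fin ℓ → ℤ) (ha : ∑ i, a i = 0)
    (l : List ℕ) (hp : IsPartition l) (hcor : Corresponds ℓ a l)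
    (i : Fin ℓ) (hmax : ∀ j, a j ≤ a i) (hright : ∀ j, i < j → a j < a i) :
    (l.headD 0 : ℤ) = (a i - 1) * ℓ + ((i : ℕ) + 1) := by
  obtain ⟨s, hs⟩ := hcor
  have hshift := shift_eq_of_beads_eq_image i.pos ha hp hs
  have hbeta : IsGreatest (Beads ℓ a) ((l.headD 0 : ℤ) + l.length - 1 + s) :=
    hs ▸ (add_left_mono (a := s)).map_isGreatest (isGreatest_betaSet hp)
  have hlargest := (isGreatest_beads i hmax hright).unique hbeta
  rw [hshift] at hlargest
  linear_combination -hlargest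

/-- If the balanced flush abacus of the ℓ-core l is given by a (with a i the
rightmost maximum coordinate, 0-based), then λ₁ = (a_i - 1)ℓ + (i+1). -/
theorem stmt7 (ℓ : ℕ) (hℓ : 2 ≤ ℓ) (a : Fin ℓ → ℤ) (ha : ∑ i, a i = 0)
    (l : List ℕ) (hp : IsPartition l) (hc : IsCore ℓ l) (hcor : Corresponds ℓ a l)
    (i : Fin ℓ) (hmax : ∀ j, a j ≤ a i) (hright : ∀ j, i < j → a j < a i) :
    (l.headD 0 : ℤ) = (a i - 1) * ℓ + ((i : ℕ) + 1) :=
  stmt7_general ℓ a ha l hp hcor i hmax hright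
end

section
/- Under the bijection π between the root lattice and ℓ-cores, all ℓ-cores λ with λ₁ = k > 0 correspond to lattice points lying on the affine hyperplane {(a₁,...,a_ℓ) : Σ a_j = 0 and a_i = ⌈k/ℓ⌉}, where i ∈ {1,...,ℓ} satisfies i ≡ k mod ℓ. -/
/-! The balance condition `∑ aⱼ = 0` pins down the shift `s` between the abacus and the
beta-set: counting beads in a large window `[-Nℓ, Nℓ)` gives `ℓ (N + 1)` on the abacus side and
`Nℓ + s + len λ` on the partition side, so `s = ℓ - len λ`. The largest bead of the abacus is then
the shifted largest beta-number `λ₁ + len λ - 1 + s = k + ℓ - 1 = ⌈k/ℓ⌉ ℓ + i` (with `i` 0-based),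
and on a flush abacus the largest bead sits at the top level of its runner, so `aᵢ = ⌈k/ℓ⌉`. -/

lemma List.length_filter_lt_range (m b : ℕ) :
    ((List.range m).filter (fun c => decide (b < c))).length = m - 1 - b := by
  induction m with
  | zero => simp
  | succ n ih =>
    rw [List.range_succ, List.filter_append, List.length_append, ih]
    by_cases h : b < n <;> simp [h] <;> omega

lemma Int.eq_and_eq_of_mul_add_fin_eq {ℓ : ℕ} {r r' : ℤ} {u v : Fin ℓ}
    (h : r * ℓ + u = r' * ℓ + v) : r = r' ∧ u = v := by
  have hℓ : (ℓ : ℤ) ≠ 0 := by have := u.pos; omega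
  have hmod := congrArg (· % (ℓ : ℤ)) h
  simp only [add_comm (_ * _), Int.add_mul_emod_self_right] at hmod
  rw [Int.emod_eq_of_lt (by omega) (by omega), Int.emod_eq_of_lt (by omega) (by omega)] at hmod
  refine ⟨?_, Fin.ext (by exact_mod_cast hmod)⟩
  rw [hmod, add_left_inj] at h
  exact mul_right_cancel₀ hℓ h

lemma Int.mul_add_fin_mem_Ico_iff {ℓ : ℕ} {r A B : ℤ} (j : Fin ℓ) :
    r * ℓ + j ∈ Set.Ico (A * ℓ) (B * ℓ) ↔ r ∈ Set.Ico A B := by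
  have hj : (j : ℤ) < ℓ := by exact_mod_cast j.2
  simp only [Set.mem_Ico]
  constructor
  · rintro ⟨h1, h2⟩
    exact ⟨by by_contra! h; nlinarith, by by_contra! h; nlinarith⟩
  · rintro ⟨h1, h2⟩
    exact ⟨by nlinarith, by nlinarith⟩

lemma one_le_hook (l : List ℕ) (b c : ℕ) : 1 ≤ hook l b c := by
  unfold hook; omega

lemma betaSet_eq_union (l : List ℕ) :
    BetaSet l = ↑((Finset.range l.length).image fun b => (hook l b 1 : ℤ)) ∪ Set.Iio 0 := by
  ext x
  simp [BetaSet, eq_comm]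

namespace IsPartition

variable {l : List ℕ} (hp : IsPartition l)
include hp

lemma one_le_getD {b : ℕ} (hb : b < l.length) : 1 ≤ l.getD b 0 := by
  rw [List.getD_eq_getElem l 0 hb]
  exact hp.2 _ (List.getElem_mem hb)

lemma getD_le_getD_s9 {b c : ℕ} (hbc : b ≤ c) (hc : c < l.length) : l.getD c 0 ≤ l.getD b 0 := by
  rw [List.getD_eq_getElem l 0 hc, List.getD_eq_getElem l 0 (hbc.trans_lt hc)]
  rcases hbc.eq_or_lt with rfl | h
  · rfl
  · exact List.pairwise_iff_getElem.mp hp.1 b c _ hc h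

lemma hook_one_eq {b : ℕ} (hb : b < l.length) :
    hook l b 1 = l.getD b 0 + (l.length - 1 - b) := by
  have hrows : (List.range l.length).filter (fun c => decide (b < c ∧ 1 ≤ l.getD c 0))
      = (List.range l.length).filter (fun c => decide (b < c)) := by
    refine List.filter_congr fun c hc => ?_
    simp only [decide_eq_decide, and_iff_left_iff_imp]
    exact fun _ => hp.one_le_getD (List.mem_range.mp hc)
  have := hp.one_le_getD hb
  rw [hook, hrows, List.length_filter_lt_range]
  omega

lemma hook_one_lt_hook_one {b c : ℕ} (hbc : b < c) (hc : c < l.length) :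
    hook l c 1 < hook l b 1 := by
  rw [hp.hook_one_eq hc, hp.hook_one_eq (hbc.trans hc)]
  have := hp.getD_le_getD_s9 hbc.le hc
  omega

lemma injOn_hook_one : Set.InjOn (fun b => (hook l b 1 : ℤ)) (Set.Iio l.length) := by
  intro b hb c hc hbc
  simp only [Nat.cast_inj] at hbc
  by_contra hne
  rcases Nat.lt_or_gt_of_ne hne with h | h
  · exact (hp.hook_one_lt_hook_one h hc).ne' hbc
  · exact (hp.hook_one_lt_hook_one h hb).ne hbc

lemma isGreatest_betaSet (hl : 0 < l.length) :
    IsGreatest (BetaSet l) (l.headD 0 + l.length - 1) := by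
  have hhead : l.getD 0 0 = l.headD 0 := by cases l <;> rfl
  refine ⟨Or.inl ⟨0, hl, ?_⟩, ?_⟩
  · rw [hp.hook_one_eq hl, ← hhead]
    omega
  · rintro y (⟨b, hb, rfl⟩ | hy)
    · have := hp.getD_le_getD_s9 (Nat.zero_le b) hb
      rw [hp.hook_one_eq hb, ← hhead]
      omega
    · omega

lemma betaSet_subset_Iio : BetaSet l ⊆ Set.Iio (l.headD 0 + l.length) := by
  rcases l.length.eq_zero_or_pos with hl | hl
  · rintro y (⟨b, hb, -⟩ | hy)
    · omega
    · simp only [Set.mem_Iio]; omega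
  · intro y hy
    have := (hp.isGreatest_betaSet hl).2 hy
    simp only [Set.mem_Iio]
    omega

lemma ncard_betaSet_inter_Ico {T U : ℤ} (hT : 0 ≤ T) (hU : BetaSet l ⊆ Set.Iio U) :
    ((BetaSet l ∩ Set.Ico (-T) U).ncard : ℤ) = T + l.length := by
  have hU0 : 0 ≤ U := by
    have : (-1 : ℤ) < U := hU (Or.inr (by norm_num))
    omega
  have hsplit : BetaSet l ∩ Set.Ico (-T) U
      = ↑(Finset.Ico (-T) 0 ∪ (Finset.range l.length).image fun b => (hook l b 1 : ℤ)) := by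
    ext x
    simp only [betaSet_eq_union, Set.mem_inter_iff, Set.mem_union, Finset.coe_union,
      Finset.coe_Ico, Set.mem_Ico, Set.mem_Iio]
    have hhook : x ∈ (↑((Finset.range l.length).image fun b => (hook l b 1 : ℤ)) : Set ℤ) →
        -T ≤ x ∧ x < U := by
      intro hx
      refine ⟨?_, hU (betaSet_eq_union l ▸ Or.inl hx)⟩
      obtain ⟨b, -, rfl⟩ := Finset.mem_image.mp hx
      have := one_le_hook l b 1
      omega
    have hneg : x < 0 → x < U := fun hx => hx.trans_le hU0
    tauto
  have hdisj : Disjoint (Finset.Ico (-T) 0)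
      ((Finset.range l.length).image fun b => (hook l b 1 : ℤ)) := by
    rw [Finset.disjoint_left]
    intro x hx hx'
    obtain ⟨b, -, rfl⟩ := Finset.mem_image.mp hx'
    have := one_le_hook l b 1
    simp only [Finset.mem_Ico] at hx
    omega
  rw [hsplit, Set.ncard_coe_finset, Finset.card_union_of_disjoint hdisj,
    Finset.card_image_of_injOn (by simpa using hp.injOn_hook_one), Finset.card_range]
  simp [Int.card_Ico, hT]

end IsPartition

section Abacus

variable {ℓ : ℕ} {a : Fin ℓ → ℤ}

lemma mul_add_mem_beads_iff {r : ℤ} {i : Fin ℓ} : r * ℓ + i ∈ Beads ℓ a ↔ r ≤ a i := by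
  constructor
  · rintro ⟨j, r', hr', h⟩
    obtain ⟨rfl, rfl⟩ := Int.eq_and_eq_of_mul_add_fin_eq h
    exact hr'
  · exact fun h => ⟨i, r, h, rfl⟩

lemma eq_of_isGreatest_beads {r : ℤ} {i : Fin ℓ} (h : IsGreatest (Beads ℓ a) (r * ℓ + i)) :
    a i = r := by
  have hℓ : (0 : ℤ) < ℓ := by exact_mod_cast i.pos
  refine le_antisymm ?_ (mul_add_mem_beads_iff.mp h.1)
  have := h.2 (mul_add_mem_beads_iff.mpr le_rfl : a i * ℓ + i ∈ Beads ℓ a)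
  exact le_of_mul_le_mul_right (by linarith) hℓ

lemma beads_inter_Ico_eq {N : ℤ} (ha : ∀ j, -N ≤ a j ∧ a j < N) :
    Beads ℓ a ∩ Set.Ico (-N * ℓ) (N * ℓ)
      = ↑(Finset.univ.biUnion fun j => (Finset.Icc (-N) (a j)).image fun r => r * ℓ + (j : ℤ)) := by
  ext x
  simp only [Set.mem_inter_iff, Finset.coe_biUnion, Finset.coe_univ, Set.mem_univ,
    Set.iUnion_true, Finset.coe_image, Finset.coe_Icc, Set.mem_iUnion, Set.mem_image,
    Set.mem_Icc]
  constructor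
  · rintro ⟨⟨j, r, hr, rfl⟩, hx⟩
    exact ⟨j, r, ⟨((Int.mul_add_fin_mem_Ico_iff j).mp hx).1, hr⟩, rfl⟩
  · rintro ⟨j, r, ⟨h1, h2⟩, rfl⟩
    exact ⟨⟨j, r, h2, rfl⟩, (Int.mul_add_fin_mem_Ico_iff j).mpr ⟨h1, h2.trans_lt (ha j).2⟩⟩

lemma ncard_beads_inter_Ico {N : ℤ} (ha : ∀ j, -N ≤ a j ∧ a j < N) :
    ((Beads ℓ a ∩ Set.Ico (-N * ℓ) (N * ℓ)).ncard : ℤ) = ∑ j, (a j + N + 1) := by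
  have hinj (j : Fin ℓ) : Function.Injective fun r : ℤ => r * ℓ + j :=
    fun r r' h => (Int.eq_and_eq_of_mul_add_fin_eq h).1
  rw [beads_inter_Ico_eq ha, Set.ncard_coe_finset, Finset.card_biUnion]
  · push_cast
    refine Finset.sum_congr rfl fun j _ => ?_
    rw [Finset.card_image_of_injective _ (hinj j), Int.card_Icc_of_le _ _ (by linarith [ha j])]
    ring
  · intro u _ v _ huv
    refine Finset.disjoint_left.mpr fun x hu hv => huv ?_
    obtain ⟨r, -, rfl⟩ := Finset.mem_image.mp hu
    obtain ⟨r', -, h⟩ := Finset.mem_image.mp hv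
    exact (Int.eq_and_eq_of_mul_add_fin_eq h).2.symm

end Abacus

lemma ncard_image_add_inter_Ico (X : Set ℤ) (s A B : ℤ) :
    ((· + s) '' X ∩ Set.Ico A B).ncard = (X ∩ Set.Ico (A - s) (B - s)).ncard := by
  rw [← Set.preimage_add_const_Ico, ← Set.image_inter_preimage,
    Set.ncard_image_of_injective _ (add_left_injective s)]

lemma shift_eq_of_sum_eq_zero {ℓ : ℕ} (hℓ : 0 < ℓ) {a : Fin ℓ → ℤ} (ha : ∑ j, a j = 0)
    {l : List ℕ} (hp : IsPartition l) {s : ℤ} (hs : Beads ℓ a = (· + s) '' BetaSet l) :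
    s = ℓ - l.length := by
  set N : ℤ := |s| + ∑ j, |a j| + l.headD 0 + l.length + 1
  have hNa (j : Fin ℓ) : -N ≤ a j ∧ a j < N := by
    have := Finset.single_le_sum (fun j _ => abs_nonneg (a j)) (Finset.mem_univ j)
    have := abs_le.mp (le_refl |a j|)
    have := abs_nonneg s
    omega
  have hN : |s| + l.headD 0 + l.length + 1 ≤ N := by
    have := Finset.sum_nonneg fun j (_ : j ∈ Finset.univ) => abs_nonneg (a j)
    omega
  have hNℓ : N ≤ N * ℓ := le_mul_of_one_le_right (by positivity) (by exact_mod_cast hℓ)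
  have hcount := ncard_beads_inter_Ico hNa
  rw [hs, ncard_image_add_inter_Ico, show -N * ℓ - s = -(N * ℓ + s) by ring,
    hp.ncard_betaSet_inter_Ico (by linarith [neg_abs_le s])
      (hp.betaSet_subset_Iio.trans (Set.Iio_subset_Iio (by linarith [le_abs_self s])))] at hcount
  simp only [Finset.sum_add_distrib, ha, Finset.sum_const, Finset.card_univ, Fintype.card_fin,
    nsmul_eq_mul] at hcount
  linarith

lemma Nat.add_sub_one_mod_eq {ℓ k i : ℕ} (hi : i < ℓ) (h : (i + 1) % ℓ = k % ℓ) :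
    (k + ℓ - 1) % ℓ = i := by
  have hmod : k + (ℓ - 1) ≡ i + 1 + (ℓ - 1) [MOD ℓ] := Nat.ModEq.add_right _ h.symm
  rw [show i + 1 + (ℓ - 1) = i + ℓ by omega] at hmod
  rw [show k + ℓ - 1 = k + (ℓ - 1) by omega, hmod, Nat.add_mod_right, Nat.mod_eq_of_lt hi]

theorem stmt9_general (ℓ k : ℕ) (hℓ : 2 ≤ ℓ) (hk : 0 < k)
    (a : Fin ℓ → ℤ) (ha : ∑ i, a i = 0)
    (l : List ℕ) (hp : IsPartition l) (hcor : Corresponds ℓ a l)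
    (hl1 : l.headD 0 = k)
    (i : Fin ℓ) (hi : ((i : ℕ) + 1) % ℓ = k % ℓ) :
    a i = ((k + ℓ - 1) / ℓ : ℕ) := by
  obtain ⟨s, hs⟩ := hcor
  have hl : 0 < l.length := List.length_pos_of_ne_nil (by rintro rfl; simp at hl1; omega)
  have hshift := shift_eq_of_sum_eq_zero (by omega) ha hp hs
  have htop : IsGreatest (Beads ℓ a) (k + ℓ - 1) := by
    have := (add_left_mono (a := s)).map_isGreatest (hp.isGreatest_betaSet hl)
    rwa [← hs, hl1, hshift, show (k : ℤ) + l.length - 1 + (ℓ - l.length) = k + ℓ - 1 by ring]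
      at this
  have hdiv := Nat.div_add_mod' (k + ℓ - 1) ℓ
  rw [Nat.add_sub_one_mod_eq i.2 hi] at hdiv
  generalize (k + ℓ - 1) / ℓ = q at hdiv ⊢
  have hdecomp : ((q * ℓ + i : ℕ) : ℤ) = k + ℓ - 1 := by omega
  push_cast at hdecomp
  exact eq_of_isGreatest_beads (hdecomp ▸ htop)

/-- Under π, all ℓ-cores with λ₁ = k > 0 lie on the affine hyperplane
a_i = ⌈k/ℓ⌉, where 1 ≤ i ≤ ℓ and i ≡ k (mod ℓ).  (Fin index i corresponds to
the coordinate i+1.) -/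
theorem stmt9 (ℓ k : ℕ) (hℓ : 2 ≤ ℓ) (hk : 0 < k)
    (a : Fin ℓ → ℤ) (ha : ∑ i, a i = 0)
    (l : List ℕ) (hp : IsPartition l) (hc : IsCore ℓ l) (hcor : Corresponds ℓ a l)
    (hl1 : l.headD 0 = k)
    (i : Fin ℓ) (hi : ((i : ℕ) + 1) % ℓ = k % ℓ) :
    a i = ((k + ℓ - 1) / ℓ : ℕ) :=
  stmt9_general ℓ k hℓ hk a ha l hp hcor hl1 i hi
end

section
/- The Coxeter length of the minimal length coset representative w(λ) in the affine symmetric group corresponding to an ℓ-core λ equals Σ_{i=0}^{ℓ−1} λ_{R(i)}, where R(i) is the longest row of λ whose rightmost box has residue i (the summand is 0 if no row ends in residue i). -/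
/-- Number of steps of the canonical reduction of an ℓ-core to ∅ (with fuel). -/
def reduceLenAux (ℓ : ℕ) : ℕ → List ℕ → ℕ
  | 0, _ => 0
  | fuel + 1, l => if l = [] then 0 else reduceLenAux ℓ fuel (removeRes ℓ l) + 1

/-- The Coxeter length of the minimal length coset representative w(λ) attached to
the ℓ-core λ: the number of steps in the canonical reduction of λ to ∅. -/
def coxLen (ℓ : ℕ) (l : List ℕ) : ℕ := reduceLenAux ℓ l.sum l

/-- Length of the longest row of l whose rightmost box has residue i (0 if none). -/
def resRowMax (ℓ : ℕ) (l : List ℕ) (i : ℕ) : ℕ :=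
  (((List.range l.length).filter
      (fun a => decide (((l.getD a 0 : ℤ) - (a + 1)) % ℓ = (i : ℤ)))).map
    (fun a => l.getD a 0)).foldr max 0

/-- The Berg–Vazirani bijection: delete all rows whose first-column hook length is
congruent to h_{(1,1)} mod ℓ. -/
def BV (ℓ : ℕ) (l : List ℕ) : List ℕ :=
  ((List.range l.length).filter
      (fun a => decide (¬ hook l a 1 % ℓ = hook l 0 1 % ℓ))).map (fun a => l.getD a 0)

/-!
Encode `l` by its beads `l[a] - a - 1`, the contents of the last boxes of the rows, continued by
`-a - 1` below the last row. Hook lengths are exactly the differences between a bead and a smaller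
gap, so `l` is an `ℓ`-core iff its bead set is stable under `x ↦ x - ℓ`.

Let `b` be the bead of the bottom row. As `b - 1` is a gap, a core has no bead `≥ b - 1` congruent
to `b - 1`. Hence one reduction step moves every bead of residue `b` (of a nonempty row) into the gap
just below it. This keeps the bead set `ℓ`-stable, turns the longest row ending in residue `b` into
the longest row ending in residue `b - 1`, one box shorter (no row ended in residue `b - 1`
before), and leaves the other residues alone. So each step lowers `∑ i, λ_{R(i)}` by exactly one,
and the reduction stops at `∅`, where the sum is `0`.
-/

theorem List.length_filter_range_eq_card (n : ℕ) (p : ℕ → Bool) :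
    ((List.range n).filter p).length = ((Finset.range n).filter (fun i => p i)).card := by
  simp [Finset.card, Finset.range, Finset.filter, Multiset.range]

theorem List.getD_map_range (f : ℕ → ℕ) (n a : ℕ) :
    ((List.range n).map f).getD a 0 = if a < n then f a else 0 := by
  simp only [List.getD_eq_getElem?_getD, List.getElem?_map]
  split_ifs <;> simp_all

theorem List.getD_filter_pos_map_range {f : ℕ → ℕ} (hf : Antitone f) (n a : ℕ) :
    (((List.range n).map f).filter (fun x => decide (0 < x))).getD a 0
      = if a < n then f a else 0 := by
  induction n with
  | zero => simp
  | succ n ih =>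
    rcases Nat.eq_zero_or_pos (f n) with hn | hn
    · rw [List.range_succ, List.map_append, List.filter_append, List.map_singleton,
        List.filter_singleton, hn]
      simp only [lt_self_iff_false, decide_false, cond_false, List.append_nil, ih]
      rcases lt_trichotomy a n with h | rfl | h
      · simp [h, h.trans n.lt_succ_self]
      · simp [hn]
      · simp [h.not_gt, (Nat.succ_le_of_lt h).not_gt]
    · rw [List.filter_eq_self.2 fun x hx => ?_, List.getD_map_range]
      obtain ⟨b, hb, rfl⟩ := List.mem_map.1 hx
      simpa using hn.trans_le (hf (Nat.lt_succ_iff.1 (List.mem_range.1 hb)))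

theorem StrictAnti.notMem_range_of_lt_of_lt {α : Type*} [LinearOrder α] {f : ℕ → α}
    (hf : StrictAnti f) {j : ℕ} {y : α} (hlt : f (j + 1) < y) (hgt : y < f j) :
    y ∉ Set.range f := by
  rintro ⟨i, rfl⟩
  rcases le_or_gt i j with hij | hji
  · exact (hf.antitone hij).not_gt hgt
  · exact (hf.antitone hji).not_gt hlt

theorem Int.sub_one_emod_ne {n : ℕ} (hn : 1 < n) (x : ℤ) : (x - 1) % n ≠ x % n := fun h => by
  have : (n : ℤ) = 1 := Int.eq_one_of_dvd_one (by positivity) (by simpa using Int.ModEq.dvd h)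
  omega

theorem exists_natCast_eq_emod {n : ℕ} (hn : 0 < n) (x : ℤ) : ∃ r < n, (r : ℤ) = x % n :=
  ⟨(x % n).toNat, by have := Int.emod_lt_of_pos x (by omega : (0 : ℤ) < n); omega,
    Int.toNat_of_nonneg (Int.emod_nonneg x (by omega))⟩

def rowLen (l : List ℕ) (a : ℕ) : ℕ := l.getD a 0

def bead (l : List ℕ) (a : ℕ) : ℤ := (rowLen l a : ℤ) - (a + 1)

def beads (l : List ℕ) : Set ℤ := Set.range (bead l)

section

variable {ℓ : ℕ} {l : List ℕ} {a c i : ℕ}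

theorem rowLen_of_length_le (h : l.length ≤ a) : rowLen l a = 0 := by
  simp [rowLen, List.getD_eq_getElem?_getD, List.getElem?_eq_none h]

theorem bead_of_length_le (h : l.length ≤ a) : bead l a = -a - 1 := by
  simp only [bead, rowLen_of_length_le h]
  ring

theorem IsPartition.rowLen_antitone (hp : IsPartition l) : Antitone (rowLen l) := by
  intro a b hab
  rcases lt_or_ge b l.length with hb | hb
  · rcases hab.eq_or_lt with rfl | hab
    · rfl
    · simpa [rowLen, List.getD_eq_getElem, hb, hab.trans hb] using
        List.pairwise_iff_getElem.1 hp.1 a b (hab.trans hb) hb hab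
  · simp [rowLen_of_length_le hb]

theorem IsPartition.rowLen_pos_iff (hp : IsPartition l) : 0 < rowLen l a ↔ a < l.length := by
  refine ⟨fun h => ?_, fun h => ?_⟩
  · by_contra hla
    simp [rowLen_of_length_le (not_lt.1 hla)] at h
  · rw [rowLen, List.getD_eq_getElem _ _ h]
    exact hp.2 _ (List.getElem_mem h)

theorem IsPartition.bead_strictAnti (hp : IsPartition l) : StrictAnti (bead l) :=
  strictAnti_nat_of_succ_lt fun a => by
    have : rowLen l (a + 1) ≤ rowLen l a := hp.rowLen_antitone (Nat.le_succ a)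
    simp only [bead]
    push_cast
    omega

theorem IsPartition.sum_pos (hp : IsPartition l) (hne : l ≠ []) : 0 < l.sum := by
  obtain ⟨x, t, rfl⟩ := List.exists_cons_of_ne_nil hne
  have := hp.2 x List.mem_cons_self
  simp only [List.sum_cons]
  omega

theorem sum_eq_sum_range_rowLen {N : ℕ} (h : l.length ≤ N) :
    l.sum = ∑ a ∈ Finset.range N, rowLen l a := by
  induction l generalizing N with
  | nil => simp [rowLen]
  | cons x t ih =>
    rw [List.length_cons] at h
    obtain _ | N := N
    · omega
    rw [List.sum_cons, Finset.sum_range_succ', ih (N := N) (by omega)]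
    simp [rowLen, add_comm]

theorem IsPartition.hook_eq {k : ℕ} (hp : IsPartition l) (a : ℕ)
    (hlt : rowLen l (k + 1) < c) (hle : c ≤ rowLen l k) :
    hook l a c = rowLen l a - c + (k - a) + 1 := by
  have hleg : (Finset.range l.length).filter (fun i => decide (a < i ∧ c ≤ l.getD i 0))
      = Finset.Ioc a k := by
    ext i
    have hk : k < l.length := hp.rowLen_pos_iff.1 (by omega)
    have hlo : i ≤ k → c ≤ rowLen l i := fun h => hle.trans (hp.rowLen_antitone h)
    have hhi : k + 1 ≤ i → rowLen l i < c := fun h => (hp.rowLen_antitone h).trans_lt hlt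
    simp only [Finset.mem_filter, Finset.mem_range, Finset.mem_Ioc, decide_eq_true_eq]
    change i < l.length ∧ a < i ∧ c ≤ rowLen l i ↔ _
    constructor
    · rintro ⟨-, hai, hci⟩
      exact ⟨hai, by by_contra! h; exact (hhi h).not_ge hci⟩
    · rintro ⟨hai, hik⟩
      exact ⟨by omega, hai, hlo hik⟩
  rw [hook, List.length_filter_range_eq_card, hleg, Nat.card_Ioc]
  rfl

theorem sub_mul_mem_beads (hcl : ∀ x ∈ beads l, x - ℓ ∈ beads l) {x : ℤ} (hx : x ∈ beads l) :
    ∀ m : ℕ, x - m * ℓ ∈ beads l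
  | 0 => by simpa using hx
  | m + 1 => by
    have := hcl _ (sub_mul_mem_beads hcl hx m)
    rwa [sub_sub, ← add_one_mul, ← Nat.cast_succ] at this

/-- The hook of the box `(a, c)` joins the bead of row `a` to the gap `c - k - 2`, where row `k`
is the last row reaching column `c`. -/
theorem isCore_of_sub_mem_beads (hp : IsPartition l) (hcl : ∀ x ∈ beads l, x - ℓ ∈ beads l) :
    IsCore ℓ l := by
  intro a _ c hc1 hca ⟨m, hm⟩
  change c ≤ rowLen l a at hca
  have hex : ∃ j, rowLen l j < c := ⟨l.length, by rw [rowLen_of_length_le le_rfl]; omega⟩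
  obtain ⟨k, hk⟩ := Nat.exists_eq_add_one_of_ne_zero (n := Nat.find hex) fun h0 => by
    have := Nat.find_spec hex
    rw [h0] at this
    exact (hp.rowLen_antitone a.zero_le).not_gt (this.trans_le hca)
  have hlt : rowLen l (k + 1) < c := hk ▸ Nat.find_spec hex
  have hle : c ≤ rowLen l k := not_lt.1 (Nat.find_min hex (by omega))
  have hhook := hp.hook_eq a hlt hle
  have hak : a ≤ k := by
    by_contra! h
    exact (hp.rowLen_antitone h).not_gt (hlt.trans_le hca)
  have hgap : bead l a - hook l a c ∉ beads l := by
    refine hp.bead_strictAnti.notMem_range_of_lt_of_lt (j := k) ?_ ?_ <;>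
    · simp only [bead, hhook]
      push_cast [hca, hak]
      omega
  exact hgap (by simpa [hm, mul_comm] using sub_mul_mem_beads hcl ⟨a, rfl⟩ m)

/-- If `y = x - ℓ` were a gap below the bead `x` of row `a`, the box of row `a` in column
`y + k + 2`, where `k + 1` is the first row whose bead lies below `y`, would have hook length `ℓ`. -/
theorem IsCore.sub_mem_beads (hℓ : 0 < ℓ) (hp : IsPartition l) (hc : IsCore ℓ l) {x : ℤ}
    (hx : x ∈ beads l) : x - ℓ ∈ beads l := by
  obtain ⟨a, rfl⟩ := hx
  by_contra hgap
  set y := bead l a - ℓ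
  have hex : ∃ j, bead l j < y :=
    ⟨l.length + y.natAbs, by rw [bead_of_length_le (by omega)]; omega⟩
  obtain ⟨k, hk⟩ := Nat.exists_eq_add_one_of_ne_zero (n := Nat.find hex) fun h0 => by
    have := Nat.find_spec hex
    rw [h0] at this
    have := hp.bead_strictAnti.antitone a.zero_le
    omega
  have hlt : bead l (k + 1) < y := hk ▸ Nat.find_spec hex
  have hle : y < bead l k :=
    (not_lt.1 (Nat.find_min hex (by omega))).lt_of_ne fun h => hgap ⟨k, h.symm⟩
  have hak : a ≤ k := by
    by_contra! h
    have : bead l a ≤ bead l (k + 1) := hp.bead_strictAnti.antitone h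
    omega
  obtain ⟨c, hcy⟩ : ∃ c : ℕ, (c : ℤ) = y + k + 2 := ⟨_, Int.toNat_of_nonneg (by
    simp only [bead] at hlt; omega)⟩
  have hclt : rowLen l (k + 1) < c := by simp only [bead] at hlt; push_cast at hlt; omega
  have hcle : c ≤ rowLen l k := by simp only [bead] at hle; omega
  have hca : c ≤ rowLen l a := hcle.trans (hp.rowLen_antitone hak)
  have hhook : hook l a c = ℓ := by
    have := hp.hook_eq a hclt hcle
    simp only [y, bead] at hcy
    zify [hca, hak] at this
    omega
  exact hc a (hp.rowLen_pos_iff.1 (by omega)) c (by omega) hca (hhook ▸ dvd_rfl)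

def bottomBead (l : List ℕ) : ℤ := bead l (l.length - 1)

def removeRow (ℓ : ℕ) (l : List ℕ) (a : ℕ) : ℕ :=
  if bead l a % ℓ = bottomRes ℓ l then rowLen l a - 1 else rowLen l a

-- `removeRes` leaves the empty rows past the end of `l` alone, whatever their residue.
def LosesBox (ℓ : ℕ) (l : List ℕ) (a : ℕ) : Prop :=
  0 < rowLen l a ∧ bead l a ≡ bottomBead l [ZMOD ℓ]

theorem removeRes_eq_filter_map_removeRow (ℓ : ℕ) (l : List ℕ) :
    removeRes ℓ l = ((List.range l.length).map (removeRow ℓ l)).filter (fun x => decide (0 < x)) :=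
  rfl

theorem bottomRes_eq (hne : l ≠ []) : bottomRes ℓ l = bottomBead l % ℓ := by
  have := List.length_pos_iff.2 hne
  simp only [bottomRes, bottomBead, bead, rowLen]
  congr 1
  omega

theorem removeRow_le : removeRow ℓ l a ≤ rowLen l a := by
  unfold removeRow
  split_ifs <;> omega

theorem removeRow_of_losesBox (hne : l ≠ []) (h : LosesBox ℓ l a) :
    removeRow ℓ l a = rowLen l a - 1 :=
  if_pos (by rw [bottomRes_eq hne]; exact h.2)

theorem removeRow_of_not_losesBox (hne : l ≠ []) (h : ¬ LosesBox ℓ l a) :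
    removeRow ℓ l a = rowLen l a := by
  unfold removeRow
  split_ifs with hres
  · rw [bottomRes_eq hne] at hres
    have : rowLen l a = 0 := by by_contra h0; exact h ⟨Nat.pos_of_ne_zero h0, hres⟩
    omega
  · rfl

theorem IsPartition.losesBox_bottom (hp : IsPartition l) (hne : l ≠ []) :
    LosesBox ℓ l (l.length - 1) :=
  ⟨hp.rowLen_pos_iff.2 (by simpa [Nat.sub_lt_iff_lt_add, List.length_pos_iff] using hne), rfl⟩

theorem IsPartition.bottomBead_le_bead (hp : IsPartition l) (ha : 0 < rowLen l a) :
    bottomBead l ≤ bead l a :=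
  hp.bead_strictAnti.antitone (Nat.le_sub_one_of_lt (hp.rowLen_pos_iff.1 ha))

theorem IsPartition.bottomBead_sub_one_notMem (hp : IsPartition l) (hne : l ≠ []) :
    bottomBead l - 1 ∉ beads l := by
  have hlen := List.length_pos_iff.2 hne
  have hpos : 0 < rowLen l (l.length - 1) := hp.rowLen_pos_iff.2 (by omega)
  refine hp.bead_strictAnti.notMem_range_of_lt_of_lt (j := l.length - 1) ?_ (by simp [bottomBead])
  rw [Nat.sub_add_cancel hlen, bead_of_length_le le_rfl]
  simp only [bottomBead, bead]
  omega

/-- The gap `bottomBead l - 1` forces gaps at all `bottomBead l - 1 + m * ℓ`. -/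
theorem IsCore.rowLen_eq_zero_of_modEq (hℓ : 0 < ℓ) (hp : IsPartition l) (hc : IsCore ℓ l)
    (hne : l ≠ []) (h : bead l a ≡ bottomBead l - 1 [ZMOD ℓ]) : rowLen l a = 0 := by
  by_contra hpos
  have hle := hp.bottomBead_le_bead (Nat.pos_of_ne_zero hpos)
  obtain ⟨m, hm⟩ := h.symm.dvd
  lift m to ℕ using by nlinarith
  apply hp.bottomBead_sub_one_notMem hne
  convert sub_mul_mem_beads (fun x => hc.sub_mem_beads hℓ hp) ⟨a, rfl⟩ m using 1
  linarith

theorem IsCore.rowLen_succ_lt (hℓ : 0 < ℓ) (hp : IsPartition l) (hc : IsCore ℓ l)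
    (hne : l ≠ []) (h : LosesBox ℓ l a) : rowLen l (a + 1) < rowLen l a := by
  by_contra! hge
  have heq := le_antisymm (hp.rowLen_antitone a.le_succ) hge
  have := hc.rowLen_eq_zero_of_modEq hℓ hp hne (a := a + 1) (by
    have : bead l (a + 1) = bead l a - 1 := by simp only [bead, heq]; push_cast; ring
    exact this ▸ h.2.sub_right 1)
  have := h.1
  omega

theorem IsCore.antitone_removeRow (hℓ : 0 < ℓ) (hp : IsPartition l) (hc : IsCore ℓ l)
    (hne : l ≠ []) : Antitone (removeRow ℓ l) := by
  refine antitone_nat_of_succ_le fun a => ?_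
  have hnext : removeRow ℓ l (a + 1) ≤ rowLen l (a + 1) := removeRow_le
  by_cases h : LosesBox ℓ l a
  · have := hc.rowLen_succ_lt hℓ hp hne h
    rw [removeRow_of_losesBox hne h]
    omega
  · rw [removeRow_of_not_losesBox hne h]
    exact hnext.trans (hp.rowLen_antitone a.le_succ)

theorem IsCore.rowLen_removeRes (hℓ : 0 < ℓ) (hp : IsPartition l) (hc : IsCore ℓ l)
    (hne : l ≠ []) (a : ℕ) : rowLen (removeRes ℓ l) a = removeRow ℓ l a := by
  rw [removeRes_eq_filter_map_removeRow, rowLen,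
    List.getD_filter_pos_map_range (hc.antitone_removeRow hℓ hp hne)]
  split_ifs with ha
  · rfl
  · have : rowLen l a = 0 := rowLen_of_length_le (not_lt.1 ha)
    have : removeRow ℓ l a ≤ rowLen l a := removeRow_le
    omega

theorem IsCore.rowLen_removeRes_of_losesBox (hℓ : 0 < ℓ) (hp : IsPartition l) (hc : IsCore ℓ l)
    (hne : l ≠ []) (h : LosesBox ℓ l a) : rowLen (removeRes ℓ l) a + 1 = rowLen l a := by
  rw [hc.rowLen_removeRes hℓ hp hne, removeRow_of_losesBox hne h]
  exact Nat.sub_add_cancel h.1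

theorem IsCore.bead_removeRes_of_losesBox (hℓ : 0 < ℓ) (hp : IsPartition l) (hc : IsCore ℓ l)
    (hne : l ≠ []) (h : LosesBox ℓ l a) : bead (removeRes ℓ l) a = bead l a - 1 := by
  have := hc.rowLen_removeRes_of_losesBox hℓ hp hne h
  simp only [bead]
  omega

theorem IsCore.rowLen_removeRes_of_not_losesBox (hℓ : 0 < ℓ) (hp : IsPartition l)
    (hc : IsCore ℓ l) (hne : l ≠ []) (h : ¬ LosesBox ℓ l a) :
    rowLen (removeRes ℓ l) a = rowLen l a := by
  rw [hc.rowLen_removeRes hℓ hp hne, removeRow_of_not_losesBox hne h]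

theorem IsCore.bead_removeRes_of_not_losesBox (hℓ : 0 < ℓ) (hp : IsPartition l)
    (hc : IsCore ℓ l) (hne : l ≠ []) (h : ¬ LosesBox ℓ l a) :
    bead (removeRes ℓ l) a = bead l a := by
  simp only [bead, hc.rowLen_removeRes_of_not_losesBox hℓ hp hne h]

theorem IsCore.isPartition_removeRes (hℓ : 0 < ℓ) (hp : IsPartition l) (hc : IsCore ℓ l)
    (hne : l ≠ []) : IsPartition (removeRes ℓ l) := by
  refine ⟨?_, fun x hx => by simpa using (List.mem_filter.1 hx).2⟩
  rw [removeRes_eq_filter_map_removeRow]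
  refine List.Pairwise.filter _ (List.pairwise_map.2 ?_)
  exact (List.pairwise_lt_range).imp fun hab => hc.antitone_removeRow hℓ hp hne hab.le

theorem IsCore.sum_removeRes_lt (hℓ : 0 < ℓ) (hp : IsPartition l) (hc : IsCore ℓ l)
    (hne : l ≠ []) : (removeRes ℓ l).sum < l.sum := by
  have hlen : (removeRes ℓ l).length ≤ l.length := (List.length_filter_le _ _).trans (by simp)
  rw [sum_eq_sum_range_rowLen hlen, sum_eq_sum_range_rowLen le_rfl]
  refine Finset.sum_lt_sum (fun a _ => (hc.rowLen_removeRes hℓ hp hne a).trans_le removeRow_le)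
    ⟨l.length - 1, by simpa [List.length_pos_iff] using hne, ?_⟩
  have := hc.rowLen_removeRes_of_losesBox hℓ hp hne (hp.losesBox_bottom hne)
  omega

/-- A bead and the bead `ℓ` below it have the same residue, so they move together, except when
the lower one lies on an empty row; then the next empty row provides the new lower bead. -/
theorem IsCore.isCore_removeRes (hℓ : 0 < ℓ) (hp : IsPartition l) (hc : IsCore ℓ l)
    (hne : l ≠ []) : IsCore ℓ (removeRes ℓ l) := by
  refine isCore_of_sub_mem_beads (hc.isPartition_removeRes hℓ hp hne) ?_
  rintro _ ⟨a, rfl⟩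
  obtain ⟨b, hb⟩ := hc.sub_mem_beads hℓ hp ⟨a, rfl⟩
  have hres : bead l b ≡ bottomBead l [ZMOD ℓ] ↔ bead l a ≡ bottomBead l [ZMOD ℓ] :=
    hb ▸ Int.sub_modulus_modEq_iff
  by_cases ha : LosesBox ℓ l a
  · rw [hc.bead_removeRes_of_losesBox hℓ hp hne ha]
    by_cases hb' : LosesBox ℓ l b
    · exact ⟨b, by rw [hc.bead_removeRes_of_losesBox hℓ hp hne hb', hb]; ring⟩
    · have hb0 : rowLen l b = 0 := by
        by_contra h0
        exact hb' ⟨Nat.pos_of_ne_zero h0, hres.2 ha.2⟩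
      have hb1 : rowLen l (b + 1) = 0 :=
        Nat.eq_zero_of_le_zero (hb0 ▸ hp.rowLen_antitone b.le_succ)
      refine ⟨b + 1, ?_⟩
      rw [hc.bead_removeRes_of_not_losesBox hℓ hp hne fun h => h.1.ne' hb1]
      simp only [bead] at hb ⊢
      push_cast at hb ⊢
      omega
  · rw [hc.bead_removeRes_of_not_losesBox hℓ hp hne ha]
    refine ⟨b, ?_⟩
    rw [hc.bead_removeRes_of_not_losesBox hℓ hp hne fun hb' => ?_, hb]
    have ha0 : rowLen l a = 0 := by
      by_contra h0
      exact ha ⟨Nat.pos_of_ne_zero h0, hres.1 hb'.2⟩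
    have hab : b < a := by
      by_contra! h
      have := hp.rowLen_antitone h
      have := hb'.1
      omega
    have := hp.bead_strictAnti hab
    omega

theorem rowLen_le_resRowMax (h : bead l a % ℓ = i) : rowLen l a ≤ resRowMax ℓ l i := by
  rcases lt_or_ge a l.length with ha | ha
  · exact List.le_max_of_le' 0
      (List.mem_map.2 ⟨a, List.mem_filter.2 ⟨List.mem_range.2 ha, decide_eq_true h⟩, rfl⟩) le_rfl
  · simp [rowLen_of_length_le ha]

theorem resRowMax_le {n : ℕ} (h : ∀ a, bead l a % ℓ = i → rowLen l a ≤ n) :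
    resRowMax ℓ l i ≤ n :=
  List.max_le_of_forall_le _ _ fun _ hx => by
    obtain ⟨a, ha, rfl⟩ := List.mem_map.1 hx
    exact h a (of_decide_eq_true (List.mem_filter.1 ha).2)

theorem exists_rowLen_eq_resRowMax (h : resRowMax ℓ l i ≠ 0) :
    ∃ a, bead l a % ℓ = i ∧ rowLen l a = resRowMax ℓ l i := by
  have hne : ((List.range l.length).filter
      (fun a => decide (((l.getD a 0 : ℤ) - (a + 1)) % ℓ = (i : ℤ)))).map
        (fun a => l.getD a 0) ≠ [] := by
    rintro hnil
    exact h (by rw [resRowMax, hnil]; rfl)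
  obtain ⟨a, ha, heq⟩ := List.mem_map.1 (List.maximum_mem (List.foldr_max_of_ne_nil hne).symm)
  exact ⟨a, of_decide_eq_true (List.mem_filter.1 ha).2, heq⟩

theorem IsCore.resRowMax_removeRes_bottom (hℓ : 1 < ℓ) (hp : IsPartition l) (hc : IsCore ℓ l)
    (hne : l ≠ []) (hi : (i : ℤ) = bottomBead l % ℓ) : resRowMax ℓ (removeRes ℓ l) i = 0 := by
  have hℓ0 : 0 < ℓ := by omega
  refine Nat.eq_zero_of_le_zero (resRowMax_le fun a ha => ?_)
  by_cases h : LosesBox ℓ l a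
  · rw [hc.bead_removeRes_of_losesBox hℓ0 hp hne h, hi] at ha
    exact absurd ((h.2.sub_right 1).symm.trans ha) (Int.sub_one_emod_ne hℓ _)
  · rw [hc.bead_removeRes_of_not_losesBox hℓ0 hp hne h, hi] at ha
    rw [hc.rowLen_removeRes_of_not_losesBox hℓ0 hp hne h]
    by_contra! hpos
    exact h ⟨hpos, ha⟩

theorem IsCore.resRowMax_bottom_sub_one (hℓ : 0 < ℓ) (hp : IsPartition l) (hc : IsCore ℓ l)
    (hne : l ≠ []) (hi : (i : ℤ) = (bottomBead l - 1) % ℓ) : resRowMax ℓ l i = 0 :=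
  Nat.eq_zero_of_le_zero <| resRowMax_le fun _ ha =>
    (hc.rowLen_eq_zero_of_modEq hℓ hp hne (ha.trans hi)).le

theorem IsCore.resRowMax_removeRes_bottom_sub_one (hℓ : 0 < ℓ) (hp : IsPartition l)
    (hc : IsCore ℓ l) (hne : l ≠ []) {j : ℕ} (hi : (i : ℤ) = (bottomBead l - 1) % ℓ)
    (hj : (j : ℤ) = bottomBead l % ℓ) :
    resRowMax ℓ (removeRes ℓ l) i + 1 = resRowMax ℓ l j := by
  have hbottom := hp.losesBox_bottom (ℓ := ℓ) hne
  have hpos : 0 < resRowMax ℓ l j := hbottom.1.trans_le (rowLen_le_resRowMax hj.symm)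
  refine le_antisymm ?_ ?_
  · suffices resRowMax ℓ (removeRes ℓ l) i ≤ resRowMax ℓ l j - 1 by omega
    refine resRowMax_le fun a ha => ?_
    by_cases h : LosesBox ℓ l a
    · have := hc.rowLen_removeRes_of_losesBox hℓ hp hne h
      have := rowLen_le_resRowMax (Eq.trans h.2 hj.symm)
      omega
    · rw [hc.bead_removeRes_of_not_losesBox hℓ hp hne h] at ha
      rw [hc.rowLen_removeRes_of_not_losesBox hℓ hp hne h,
        hc.rowLen_eq_zero_of_modEq hℓ hp hne (ha.trans hi)]
      exact Nat.zero_le _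
  · obtain ⟨a, ha, hmax⟩ := exists_rowLen_eq_resRowMax hpos.ne'
    have h : LosesBox ℓ l a := ⟨hmax ▸ hpos, ha.trans hj⟩
    have hlen := hc.rowLen_removeRes_of_losesBox hℓ hp hne h
    have hres : bead (removeRes ℓ l) a % ℓ = i := by
      rw [hc.bead_removeRes_of_losesBox hℓ hp hne h, hi]
      exact h.2.sub_right 1
    have := rowLen_le_resRowMax hres
    omega

theorem IsCore.resRowMax_removeRes_of_ne (hℓ : 0 < ℓ) (hp : IsPartition l) (hc : IsCore ℓ l)
    (hne : l ≠ []) (hi : (i : ℤ) ≠ bottomBead l % ℓ) (hi' : (i : ℤ) ≠ (bottomBead l - 1) % ℓ) :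
    resRowMax ℓ (removeRes ℓ l) i = resRowMax ℓ l i := by
  refine le_antisymm (resRowMax_le fun a ha => ?_) (resRowMax_le fun a ha => ?_)
  · by_cases h : LosesBox ℓ l a
    · rw [hc.bead_removeRes_of_losesBox hℓ hp hne h] at ha
      exact absurd (ha.symm.trans (h.2.sub_right 1)) hi'
    · rw [hc.bead_removeRes_of_not_losesBox hℓ hp hne h] at ha
      rw [hc.rowLen_removeRes_of_not_losesBox hℓ hp hne h]
      exact rowLen_le_resRowMax ha
  · have h : ¬ LosesBox ℓ l a := fun h => hi (ha.symm.trans h.2)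
    rw [← hc.rowLen_removeRes_of_not_losesBox hℓ hp hne h]
    exact rowLen_le_resRowMax (by rwa [hc.bead_removeRes_of_not_losesBox hℓ hp hne h])

/-- The step swaps the maxima of the bottom residue `r` and of `r - 1` (the latter is `0`)
and shortens the former by one. -/
theorem IsCore.sum_resRowMax_removeRes (hℓ : 1 < ℓ) (hp : IsPartition l) (hc : IsCore ℓ l)
    (hne : l ≠ []) :
    ∑ i ∈ Finset.range ℓ, resRowMax ℓ (removeRes ℓ l) i + 1
      = ∑ i ∈ Finset.range ℓ, resRowMax ℓ l i := by
  have hℓ0 : 0 < ℓ := by omega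
  obtain ⟨r, hrℓ, hr⟩ := exists_natCast_eq_emod hℓ0 (bottomBead l)
  obtain ⟨r', hr'ℓ, hr'⟩ := exists_natCast_eq_emod hℓ0 (bottomBead l - 1)
  have hrr' : r ≠ r' := fun h => Int.sub_one_emod_ne hℓ _ (by rw [← hr, ← hr', h])
  have hstep : ∀ i ∈ Finset.range ℓ, resRowMax ℓ (removeRes ℓ l) i + (if i = r' then 1 else 0)
      = resRowMax ℓ l (Equiv.swap r r' i) := by
    intro i hi
    rcases eq_or_ne i r with rfl | hir
    · rw [Equiv.swap_apply_left, if_neg hrr', hc.resRowMax_removeRes_bottom hℓ hp hne hr,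
        hc.resRowMax_bottom_sub_one hℓ0 hp hne hr']
    rcases eq_or_ne i r' with rfl | hir'
    · rw [Equiv.swap_apply_right, if_pos rfl,
        hc.resRowMax_removeRes_bottom_sub_one hℓ0 hp hne hr' hr]
    · rw [Equiv.swap_apply_of_ne_of_ne hir hir', if_neg hir', add_zero,
        hc.resRowMax_removeRes_of_ne hℓ0 hp hne (by omega) (by omega)]
  calc ∑ i ∈ Finset.range ℓ, resRowMax ℓ (removeRes ℓ l) i + 1
      = ∑ i ∈ Finset.range ℓ, (resRowMax ℓ (removeRes ℓ l) i + if i = r' then 1 else 0) := by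
        rw [Finset.sum_add_distrib, Finset.sum_ite_eq', if_pos (Finset.mem_range.2 hr'ℓ)]
    _ = ∑ i ∈ Finset.range ℓ, resRowMax ℓ l (Equiv.swap r r' i) := Finset.sum_congr rfl hstep
    _ = ∑ i ∈ Finset.range ℓ, resRowMax ℓ l i := by
        refine Equiv.Perm.sum_comp _ _ _ fun i hi => ?_
        rcases (Equiv.swap_apply_ne_self_iff.1 hi).2 with rfl | rfl <;> simpa

theorem reduceLenAux_eq_sum_resRowMax (hℓ : 1 < ℓ) (fuel : ℕ) (l : List ℕ)
    (hp : IsPartition l) (hc : IsCore ℓ l) (hfuel : l.sum ≤ fuel) :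
    reduceLenAux ℓ fuel l = ∑ i ∈ Finset.range ℓ, resRowMax ℓ l i := by
  induction fuel generalizing l with
  | zero =>
    obtain rfl : l = [] := by
      by_contra hne
      exact (hp.sum_pos hne).ne' (Nat.eq_zero_of_le_zero hfuel)
    simp [reduceLenAux, resRowMax]
  | succ n ih =>
    rcases eq_or_ne l [] with rfl | hne
    · simp [reduceLenAux, resRowMax]
    have hℓ0 : 0 < ℓ := by omega
    rw [reduceLenAux, if_neg hne, ih _ (hc.isPartition_removeRes hℓ0 hp hne)
      (hc.isCore_removeRes hℓ0 hp hne) (by have := hc.sum_removeRes_lt hℓ0 hp hne; omega)]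
    exact hc.sum_resRowMax_removeRes hℓ hp hne

/-- The Coxeter length of w(λ) equals Σ_{i=0}^{ℓ-1} λ_{R(i)}, where R(i) is the
longest row of λ whose rightmost box has residue i. -/
theorem stmt10 (ℓ : ℕ) (hℓ : 2 ≤ ℓ) (l : List ℕ)
    (hp : IsPartition l) (hc : IsCore ℓ l) :
    coxLen ℓ l = ∑ i ∈ Finset.range ℓ, resRowMax ℓ l i :=
  reduceLenAux_eq_sum_resRowMax hℓ l.sum l hp hc le_rfl
end
end

section
/- Let λ be an ℓ-core with n-vector (b₀,...,b_{ℓ−1}) (b_i is the maximum region containing a row-exposed box of residue i). If s_i acts on λ (1 ≤ i ≤ ℓ−1) by interchanging addable and removable i-boxes, then the n-vector of s_i(λ) is obtained by swapping b_{i−1} and b_i; for i = 0, the new n-vector is (b_{ℓ−1}+1, b₁, ..., b_{ℓ−2}, b₀−1). -/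
/-- The set of regions of row-exposed boxes of residue i (rows padded with zero
parts; the row-exposed box of 0-based row a has content λ_a - (a+1)). -/
def regionSet (ℓ : ℕ) (l : List ℕ) (i : ℤ) : Set ℤ :=
  {r | ∃ a : ℕ, ((l.getD a 0 : ℤ) - (a + 1)) % ℓ = i ∧
                r = ((l.getD a 0 : ℤ) - (a + 1)) / ℓ + 1}

/-- The action of s_i on an ℓ-core: add every addable box of residue i and remove
every removable box of residue i. -/
def siAction (ℓ i : ℕ) (l : List ℕ) : List ℕ :=
  ((List.range (l.length + 1)).map (fun a =>
    if ((l.getD a 0 + 1 : ℤ) - (a + 1)) % ℓ = (i : ℤ) ∧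
        (a = 0 ∨ l.getD a 0 < l.getD (a - 1) 0)
    then l.getD a 0 + 1
    else if 0 < l.getD a 0 ∧ ((l.getD a 0 : ℤ) - (a + 1)) % ℓ = (i : ℤ) ∧
        l.getD (a + 1) 0 < l.getD a 0
    then l.getD a 0 - 1
    else l.getD a 0)).filter (fun x => decide (0 < x))

/-! Record a partition by the contents `c_a = λ_a - a - 1` at the ends of its rows (zero rows
included). The n-vector only sees the set of these contents: `b_j` is the largest `⌊c / ℓ⌋ + 1`
over contents `c ≡ j`. Applying `s_i` replaces this set by its image under the involution of `ℤ`
exchanging each `c ≡ i - 1` with `c + 1` (a row end that cannot move is matched by the neighbouring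
row, which already ends at the partner content). This involution exchanges the residue classes
`i - 1` and `i` and keeps `⌊c / ℓ⌋` except across a multiple of `ℓ`, which happens only for `i = 0`,
raising the region of the class `ℓ - 1` by one and lowering that of the class `0` by one. -/

namespace Int

theorem emod_ediv_add_one_cases {ℓ : ℤ} (hℓ : 0 < ℓ) (x : ℤ) :
    (x % ℓ + 1 < ℓ ∧ (x + 1) % ℓ = x % ℓ + 1 ∧ (x + 1) / ℓ = x / ℓ) ∨
    (x % ℓ + 1 = ℓ ∧ (x + 1) % ℓ = 0 ∧ (x + 1) / ℓ = x / ℓ + 1) := by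
  have hx : x + 1 = (x % ℓ + 1) + ℓ * (x / ℓ) := by linarith [emod_add_mul_ediv x ℓ]
  have h0 := emod_nonneg x hℓ.ne'
  rcases lt_or_eq_of_le (show x % ℓ + 1 ≤ ℓ by linarith [emod_lt_of_pos x hℓ]) with h | h
  · left
    refine ⟨by omega, ?_, ?_⟩
    · rw [hx, add_mul_emod_self_left, emod_eq_of_lt (by omega) h]
    · rw [hx, add_mul_ediv_left _ _ hℓ.ne', ediv_eq_zero_of_lt (by omega) h, zero_add]
  · right
    refine ⟨by omega, ?_, ?_⟩
    · rw [hx, add_mul_emod_self_left, h, emod_self]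
    · rw [hx, add_mul_ediv_left _ _ hℓ.ne', h, Int.ediv_self hℓ.ne', add_comm]

theorem emod_ediv_sub_one_cases {ℓ : ℤ} (hℓ : 0 < ℓ) (x : ℤ) :
    (x % ℓ ≠ 0 ∧ (x - 1) % ℓ = x % ℓ - 1 ∧ (x - 1) / ℓ = x / ℓ) ∨
    (x % ℓ = 0 ∧ (x - 1) % ℓ = ℓ - 1 ∧ (x - 1) / ℓ = x / ℓ - 1) := by
  have := emod_nonneg (x - 1) hℓ.ne'
  have := emod_ediv_add_one_cases hℓ (x - 1)
  rw [sub_add_cancel] at this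
  omega

theorem add_one_emod_ne_emod {ℓ : ℤ} (hℓ : 2 ≤ ℓ) (x : ℤ) : (x + 1) % ℓ ≠ x % ℓ := by
  rcases emod_ediv_add_one_cases (by omega : 0 < ℓ) x with h | h <;> omega

end Int

-- `s_i` moves the end of a row from content `c ≡ i - 1` to `c + 1`, or back.
def contentReflection (ℓ i : ℕ) (x : ℤ) : ℤ :=
  if (x + 1) % ℓ = i then x + 1 else if x % ℓ = i then x - 1 else x

def prevResidue (ℓ i : ℕ) : ℕ := if i = 0 then ℓ - 1 else i - 1

-- Only for `i = 0` does `contentReflection` cross a multiple of `ℓ`, i.e. change region.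
def regionCarry (i : ℕ) : ℤ := if i = 0 then 1 else 0

section ContentReflection

variable {ℓ i : ℕ}

theorem contentReflection_of_add_one_emod {x : ℤ} (h : (x + 1) % ℓ = i) :
    contentReflection ℓ i x = x + 1 := if_pos h

theorem contentReflection_of_emod (hℓ : 2 ≤ ℓ) {x : ℤ} (h : x % ℓ = i) :
    contentReflection ℓ i x = x - 1 := by
  have := Int.add_one_emod_ne_emod (by omega : (2 : ℤ) ≤ ℓ) x
  rw [contentReflection, if_neg (by omega), if_pos h]

theorem contentReflection_of_ne {x : ℤ} (h₁ : (x + 1) % ℓ ≠ i) (h₂ : x % ℓ ≠ i) :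
    contentReflection ℓ i x = x := by
  rw [contentReflection, if_neg h₁, if_neg h₂]

theorem contentReflection_prevResidue (hℓ : 2 ≤ ℓ) (hi : i < ℓ) (x : ℤ) :
    (x % ℓ = prevResidue ℓ i ↔ contentReflection ℓ i x % ℓ = i) ∧
    (x % ℓ = prevResidue ℓ i → contentReflection ℓ i x / ℓ = x / ℓ + regionCarry i) := by
  have hℓ0 : (0 : ℤ) < ℓ := by omega
  have := Int.emod_nonneg x hℓ0.ne'
  have := Int.emod_ediv_add_one_cases hℓ0 x
  have := Int.emod_ediv_sub_one_cases hℓ0 x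
  unfold contentReflection prevResidue regionCarry
  split_ifs <;> omega

theorem contentReflection_self (hℓ : 2 ≤ ℓ) (hi : i < ℓ) (x : ℤ) :
    (x % ℓ = i ↔ contentReflection ℓ i x % ℓ = prevResidue ℓ i) ∧
    (x % ℓ = i → contentReflection ℓ i x / ℓ = x / ℓ - regionCarry i) := by
  have hℓ0 : (0 : ℤ) < ℓ := by omega
  have := Int.emod_nonneg x hℓ0.ne'
  have := Int.emod_ediv_add_one_cases hℓ0 x
  have := Int.emod_ediv_sub_one_cases hℓ0 x
  unfold contentReflection prevResidue regionCarry
  split_ifs <;> omega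

theorem contentReflection_of_ne_of_ne (hℓ : 2 ≤ ℓ) {j : ℕ} (hj : j < ℓ) (hji : j ≠ i)
    (hjp : j ≠ prevResidue ℓ i) (x : ℤ) :
    (x % ℓ = j ↔ contentReflection ℓ i x % ℓ = j) ∧
    (x % ℓ = j → contentReflection ℓ i x / ℓ = x / ℓ) := by
  have hℓ0 : (0 : ℤ) < ℓ := by omega
  have := Int.emod_nonneg x hℓ0.ne'
  have := Int.emod_ediv_add_one_cases hℓ0 x
  have := Int.emod_ediv_sub_one_cases hℓ0 x
  unfold contentReflection prevResidue at *
  split_ifs at * <;> omega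

end ContentReflection

theorem List.getD_filter_pos_of_antitone :
    ∀ (L : List ℕ), Antitone (L.getD · 0) → ∀ a, (L.filter (0 < ·)).getD a 0 = L.getD a 0
  | [], _, _ => rfl
  | x :: t, hL, a => by
    have ht : Antitone (t.getD · 0) := fun a b hab => hL (Nat.succ_le_succ hab)
    by_cases hx : 0 < x
    · rw [List.filter_cons_of_pos (by simpa using hx)]
      cases a with
      | zero => rfl
      | succ a => exact List.getD_filter_pos_of_antitone t ht a
    · have hzero : ∀ b, (x :: t).getD b 0 = 0 := fun b =>
        Nat.eq_zero_of_le_zero ((hL b.zero_le).trans (by simpa using hx))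
      rw [List.filter_cons_of_neg (by simpa using hx), List.getD_filter_pos_of_antitone t ht,
        hzero]
      exact hzero (a + 1)

theorem IsPartition.antitone_getD {l : List ℕ} (hp : IsPartition l) : Antitone (l.getD · 0) := by
  intro a b hab
  by_cases hb : b < l.length
  · simp only [List.getD_eq_getElem _ _ hb, List.getD_eq_getElem _ _ (hab.trans_lt hb)]
    rcases hab.eq_or_lt with rfl | hlt
    · rfl
    · exact List.pairwise_iff_getElem.mp hp.1 a b _ hb hlt
  · exact (List.getD_eq_default _ _ (not_lt.mp hb)).trans_le (Nat.zero_le _)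

def rowContent (l : List ℕ) (a : ℕ) : ℤ := (l.getD a 0 : ℤ) - (a + 1)

theorem mem_regionSet {ℓ : ℕ} {l : List ℕ} {j r : ℤ} :
    r ∈ regionSet ℓ l j ↔ ∃ a, rowContent l a % ℓ = j ∧ r = rowContent l a / ℓ + 1 :=
  Iff.rfl

theorem regionSet_eq_image_of_range_rowContent_eq {ℓ : ℕ} {l l' : List ℕ} {f : ℤ → ℤ}
    (hf : Set.range (rowContent l') = f '' Set.range (rowContent l)) {j k e : ℤ}
    (hres : ∀ x, x % ℓ = k ↔ f x % ℓ = j) (hreg : ∀ x, x % ℓ = k → f x / ℓ = x / ℓ + e) :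
    regionSet ℓ l' j = (· + e) '' regionSet ℓ l k := by
  ext r
  simp only [mem_regionSet, Set.mem_image]
  constructor
  · rintro ⟨a, ha, rfl⟩
    obtain ⟨x, ⟨a', rfl⟩, hx⟩ : rowContent l' a ∈ f '' Set.range (rowContent l) := hf ▸ ⟨a, rfl⟩
    have hk := (hres _).2 (hx ▸ ha)
    exact ⟨_, ⟨a', hk, rfl⟩, by rw [← hx, hreg _ hk]; ring⟩
  · rintro ⟨_, ⟨a', hk, rfl⟩, rfl⟩
    obtain ⟨a, ha⟩ : f (rowContent l a') ∈ Set.range (rowContent l') := hf ▸ ⟨_, ⟨a', rfl⟩, rfl⟩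
    exact ⟨a, ha ▸ (hres _).1 hk, by rw [ha, hreg _ hk]; ring⟩

def siActionRow (ℓ i : ℕ) (l : List ℕ) (a : ℕ) : ℕ :=
  if ((l.getD a 0 + 1 : ℤ) - (a + 1)) % ℓ = (i : ℤ) ∧
      (a = 0 ∨ l.getD a 0 < l.getD (a - 1) 0)
  then l.getD a 0 + 1
  else if 0 < l.getD a 0 ∧ ((l.getD a 0 : ℤ) - (a + 1)) % ℓ = (i : ℤ) ∧
      l.getD (a + 1) 0 < l.getD a 0
  then l.getD a 0 - 1
  else l.getD a 0

section SiActionRow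

variable {ℓ i : ℕ} {l : List ℕ}

theorem siAction_eq_filter_map :
    siAction ℓ i l = ((List.range (l.length + 1)).map (siActionRow ℓ i l)).filter (0 < ·) :=
  rfl

theorem cast_add_one_sub_eq_rowContent_add_one (a : ℕ) :
    ((l.getD a 0 + 1 : ℤ) - (a + 1)) = rowContent l a + 1 := by
  unfold rowContent; ring

theorem siActionRow_of_addable {a : ℕ} (hres : (rowContent l a + 1) % ℓ = i)
    (hadd : a = 0 ∨ l.getD a 0 < l.getD (a - 1) 0) : siActionRow ℓ i l a = l.getD a 0 + 1 := by
  rw [siActionRow, cast_add_one_sub_eq_rowContent_add_one, if_pos ⟨hres, hadd⟩]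

theorem siActionRow_of_removable (hℓ : 2 ≤ ℓ) {a : ℕ} (hres : rowContent l a % ℓ = i)
    (hpos : 0 < l.getD a 0) (hrem : l.getD (a + 1) 0 < l.getD a 0) :
    siActionRow ℓ i l a = l.getD a 0 - 1 := by
  have := Int.add_one_emod_ne_emod (by omega : (2 : ℤ) ≤ ℓ) (rowContent l a)
  rw [siActionRow, cast_add_one_sub_eq_rowContent_add_one, if_neg (by omega),
    if_pos ⟨hpos, hres, hrem⟩]

theorem siActionRow_of_not_addable_of_not_removable {a : ℕ}
    (hadd : ¬((rowContent l a + 1) % ℓ = i ∧ (a = 0 ∨ l.getD a 0 < l.getD (a - 1) 0)))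
    (hrem : ¬(0 < l.getD a 0 ∧ rowContent l a % ℓ = i ∧ l.getD (a + 1) 0 < l.getD a 0)) :
    siActionRow ℓ i l a = l.getD a 0 := by
  rw [siActionRow, cast_add_one_sub_eq_rowContent_add_one, if_neg hadd]
  exact if_neg hrem

theorem siActionRow_cases (hℓ : 2 ≤ ℓ) (hp : IsPartition l) (a : ℕ) :
    (siActionRow ℓ i l a = l.getD a 0 + 1 ∧ (rowContent l a + 1) % ℓ = i ∧
      (a = 0 ∨ l.getD a 0 < l.getD (a - 1) 0)) ∨
    (siActionRow ℓ i l a = l.getD a 0 - 1 ∧ rowContent l a % ℓ = i ∧ 0 < l.getD a 0 ∧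
      l.getD (a + 1) 0 < l.getD a 0) ∨
    (siActionRow ℓ i l a = l.getD a 0 ∧
      ((rowContent l a + 1) % ℓ = i → a ≠ 0 ∧ l.getD (a - 1) 0 = l.getD a 0) ∧
      (rowContent l a % ℓ = i → l.getD (a + 1) 0 = l.getD a 0)) := by
  have hprev : l.getD a 0 ≤ l.getD (a - 1) 0 := hp.antitone_getD (Nat.sub_le a 1)
  have hnext : l.getD (a + 1) 0 ≤ l.getD a 0 := hp.antitone_getD (Nat.le_succ a)
  by_cases hadd : (rowContent l a + 1) % ℓ = i ∧ (a = 0 ∨ l.getD a 0 < l.getD (a - 1) 0)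
  · exact Or.inl ⟨siActionRow_of_addable hadd.1 hadd.2, hadd⟩
  by_cases hrem : 0 < l.getD a 0 ∧ rowContent l a % ℓ = i ∧ l.getD (a + 1) 0 < l.getD a 0
  · exact Or.inr (Or.inl ⟨siActionRow_of_removable hℓ hrem.2.1 hrem.1 hrem.2.2, hrem.2.1,
      hrem.1, hrem.2.2⟩)
  exact Or.inr (Or.inr ⟨siActionRow_of_not_addable_of_not_removable hadd hrem,
    fun _ => by omega, fun _ => by omega⟩)

theorem siActionRow_succ_le (hℓ : 2 ≤ ℓ) (hp : IsPartition l) (a : ℕ) :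
    siActionRow ℓ i l (a + 1) ≤ siActionRow ℓ i l a := by
  have hnext : l.getD (a + 1) 0 ≤ l.getD a 0 := hp.antitone_getD (Nat.le_succ a)
  rcases siActionRow_cases (i := i) hℓ hp (a + 1) with
    ⟨hrow', hres', hadd'⟩ | ⟨hrow', -⟩ | ⟨hrow', -⟩
  · have hlt : l.getD (a + 1) 0 < l.getD a 0 := by simpa using hadd'
    rcases siActionRow_cases (i := i) hℓ hp a with ⟨hrow, -⟩ | ⟨hrow, hres, -⟩ | ⟨hrow, -⟩
    · omega
    · -- the rows would end in two consecutive contents of residue `i`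
      by_contra hgt
      have hcontent : rowContent l (a + 1) + 1 + 1 = rowContent l a := by
        unfold rowContent; push_cast; omega
      exact Int.add_one_emod_ne_emod (by omega : (2 : ℤ) ≤ ℓ) (rowContent l (a + 1) + 1)
        (by rw [hres', hcontent, hres])
    · omega
  all_goals
    rcases siActionRow_cases (i := i) hℓ hp a with ⟨hrow, -⟩ | ⟨hrow, -, -, hrem⟩ | ⟨hrow, -⟩ <;>
    omega

theorem antitone_siActionRow (hℓ : 2 ≤ ℓ) (hp : IsPartition l) : Antitone (siActionRow ℓ i l) :=
  antitone_nat_of_succ_le (siActionRow_succ_le hℓ hp)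

theorem siActionRow_of_length_lt {a : ℕ} (ha : l.length < a) : siActionRow ℓ i l a = 0 := by
  have h₀ : l.getD a 0 = 0 := List.getD_eq_default _ _ ha.le
  have h₁ : l.getD (a - 1) 0 = 0 := List.getD_eq_default _ _ (by omega)
  rw [siActionRow, h₀, h₁, if_neg (by omega), if_neg (by simp)]

theorem getD_siAction (hℓ : 2 ≤ ℓ) (hp : IsPartition l) (a : ℕ) :
    (siAction ℓ i l).getD a 0 = siActionRow ℓ i l a := by
  have hrows : ∀ a, ((List.range (l.length + 1)).map (siActionRow ℓ i l)).getD a 0 =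
      siActionRow ℓ i l a := by
    intro a
    by_cases ha : a < l.length + 1
    · simp [ha]
    · rw [List.getD_eq_default _ _ (by simpa using ha), siActionRow_of_length_lt (by omega)]
  rw [siAction_eq_filter_map, List.getD_filter_pos_of_antitone, hrows]
  simpa only [hrows] using antitone_siActionRow hℓ hp

theorem rowContent_siAction (hℓ : 2 ≤ ℓ) (hp : IsPartition l) (a : ℕ) :
    rowContent (siAction ℓ i l) a = (siActionRow ℓ i l a : ℤ) - (a + 1) := by
  rw [rowContent, getD_siAction hℓ hp]

theorem rowContent_siAction_mem_image (hℓ : 2 ≤ ℓ) (hp : IsPartition l) (a : ℕ) :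
    rowContent (siAction ℓ i l) a ∈ contentReflection ℓ i '' Set.range (rowContent l) := by
  rw [rowContent_siAction hℓ hp]
  rcases siActionRow_cases (i := i) hℓ hp a with ⟨hrow, hres, -⟩ | ⟨hrow, hres, hpos, -⟩ |
    ⟨hrow, hadd, hrem⟩
  · refine ⟨_, ⟨a, rfl⟩, ?_⟩
    rw [contentReflection_of_add_one_emod hres, hrow, rowContent]
    push_cast; ring
  · refine ⟨_, ⟨a, rfl⟩, ?_⟩
    rw [contentReflection_of_emod hℓ hres, hrow, rowContent]
    push_cast [Nat.one_le_iff_ne_zero.mpr hpos.ne']; ring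
  rw [hrow]
  by_cases hres₁ : (rowContent l a + 1) % ℓ = i
  · obtain ⟨ha, hprev⟩ := hadd hres₁
    have hcontent : rowContent l (a - 1) = rowContent l a + 1 := by
      unfold rowContent; rw [hprev]; push_cast [Nat.one_le_iff_ne_zero.mpr ha]; ring
    refine ⟨_, ⟨a - 1, rfl⟩, ?_⟩
    rw [contentReflection_of_emod hℓ (hcontent ▸ hres₁), hcontent, rowContent]
    ring
  by_cases hres₀ : rowContent l a % ℓ = i
  · have hcontent : rowContent l (a + 1) + 1 = rowContent l a := by
      unfold rowContent; rw [hrem hres₀]; push_cast; ring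
    refine ⟨_, ⟨a + 1, rfl⟩, ?_⟩
    rw [contentReflection_of_add_one_emod (hcontent ▸ hres₀), hcontent, rowContent]
  · exact ⟨_, ⟨a, rfl⟩, contentReflection_of_ne hres₁ hres₀⟩

theorem contentReflection_rowContent_mem_range (hℓ : 2 ≤ ℓ) (hp : IsPartition l) (a : ℕ) :
    contentReflection ℓ i (rowContent l a) ∈ Set.range (rowContent (siAction ℓ i l)) := by
  have hℓ' : (2 : ℤ) ≤ ℓ := by exact_mod_cast hℓ
  have hprev : l.getD a 0 ≤ l.getD (a - 1) 0 := hp.antitone_getD (Nat.sub_le a 1)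
  have hnext : l.getD (a + 1) 0 ≤ l.getD a 0 := hp.antitone_getD (Nat.le_succ a)
  simp only [Set.mem_range, rowContent_siAction hℓ hp]
  by_cases hres₁ : (rowContent l a + 1) % ℓ = i
  · rw [contentReflection_of_add_one_emod hres₁]
    by_cases hadd : a = 0 ∨ l.getD a 0 < l.getD (a - 1) 0
    · refine ⟨a, ?_⟩
      rw [siActionRow_of_addable hres₁ hadd, rowContent]
      push_cast; ring
    -- otherwise the content `c + 1` already sits at the end of row `a - 1`, which stays fixed
    have hcontent : rowContent l (a - 1) = rowContent l a + 1 := by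
      unfold rowContent; push_cast [Nat.one_le_iff_ne_zero.mpr (by omega : a ≠ 0)]; omega
    have hres₂ := Int.add_one_emod_ne_emod hℓ' (rowContent l a + 1)
    refine ⟨a - 1, ?_⟩
    rw [siActionRow_of_not_addable_of_not_removable, ← hcontent, rowContent]
    · rw [hcontent]; omega
    · rw [Nat.sub_add_cancel (by omega : 1 ≤ a)]; omega
  by_cases hres₀ : rowContent l a % ℓ = i
  · rw [contentReflection_of_emod hℓ hres₀]
    by_cases hrem : 0 < l.getD a 0 ∧ l.getD (a + 1) 0 < l.getD a 0
    · refine ⟨a, ?_⟩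
      rw [siActionRow_of_removable hℓ hres₀ hrem.1 hrem.2, rowContent]
      push_cast [Nat.one_le_iff_ne_zero.mpr hrem.1.ne']; ring
    -- otherwise the content `c - 1` already sits at the end of row `a + 1`, which stays fixed
    have hcontent : rowContent l (a + 1) = rowContent l a - 1 := by
      unfold rowContent; push_cast; omega
    have hres₂ := Int.add_one_emod_ne_emod hℓ' (rowContent l a - 1)
    rw [sub_add_cancel] at hres₂
    refine ⟨a + 1, ?_⟩
    rw [siActionRow_of_not_addable_of_not_removable, ← hcontent, rowContent]
    · rw [Nat.add_sub_cancel]; omega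
    · rw [hcontent]; omega
  · exact ⟨a, by rw [siActionRow_of_not_addable_of_not_removable (by tauto) (by tauto),
      contentReflection_of_ne hres₁ hres₀, rowContent]⟩

theorem range_rowContent_siAction (hℓ : 2 ≤ ℓ) (hp : IsPartition l) :
    Set.range (rowContent (siAction ℓ i l)) =
      contentReflection ℓ i '' Set.range (rowContent l) := by
  apply subset_antisymm
  · rintro _ ⟨a, rfl⟩
    exact rowContent_siAction_mem_image hℓ hp a
  · rintro _ ⟨_, ⟨a, rfl⟩, rfl⟩
    exact contentReflection_rowContent_mem_range hℓ hp a

end SiActionRow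

section RegionSet

variable {ℓ i : ℕ} {l : List ℕ}

theorem prevResidue_lt (hi : i < ℓ) : prevResidue ℓ i < ℓ := by
  unfold prevResidue; split_ifs <;> omega

theorem regionSet_siAction_self (hℓ : 2 ≤ ℓ) (hi : i < ℓ) (hp : IsPartition l) :
    regionSet ℓ (siAction ℓ i l) i = (· + regionCarry i) '' regionSet ℓ l (prevResidue ℓ i) :=
  regionSet_eq_image_of_range_rowContent_eq (range_rowContent_siAction hℓ hp)
    (fun x => (contentReflection_prevResidue hℓ hi x).1)
    (fun x => (contentReflection_prevResidue hℓ hi x).2)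

theorem regionSet_siAction_prevResidue (hℓ : 2 ≤ ℓ) (hi : i < ℓ) (hp : IsPartition l) :
    regionSet ℓ (siAction ℓ i l) (prevResidue ℓ i) = (· - regionCarry i) '' regionSet ℓ l i :=
  regionSet_eq_image_of_range_rowContent_eq (range_rowContent_siAction hℓ hp)
    (fun x => (contentReflection_self hℓ hi x).1)
    (fun x hx => ((contentReflection_self hℓ hi x).2 hx).trans (sub_eq_add_neg _ _))

theorem regionSet_siAction_of_ne (hℓ : 2 ≤ ℓ) (hp : IsPartition l) {j : ℕ}
    (hj : j < ℓ) (hji : j ≠ i) (hjp : j ≠ prevResidue ℓ i) :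
    regionSet ℓ (siAction ℓ i l) j = regionSet ℓ l j := by
  rw [regionSet_eq_image_of_range_rowContent_eq (e := 0) (range_rowContent_siAction hℓ hp)
    (fun x => (contentReflection_of_ne_of_ne hℓ hj hji hjp x).1)
    (fun x hx => ((contentReflection_of_ne_of_ne hℓ hj hji hjp x).2 hx).trans (add_zero _).symm)]
  simp

end RegionSet

theorem ite_nVector_eq {ℓ i : ℕ} (b : ℕ → ℤ) {j : ℕ} (hj : j < ℓ) :
    (if i = 0 then
        (if j = 0 then b (ℓ - 1) + 1 else if j = ℓ - 1 then b 0 - 1 else b j)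
      else
        (if j = i then b (i - 1) else if j = i - 1 then b i else b j)) =
    if j = i then b (prevResidue ℓ i) + regionCarry i
    else if j = prevResidue ℓ i then b i - regionCarry i else b j := by
  unfold prevResidue regionCarry
  split_ifs <;> subst_vars <;> first | rfl | omega

theorem stmt14_general (ℓ : ℕ) (hℓ : 2 ≤ ℓ) (l : List ℕ)
    (hp : IsPartition l)
    (i : ℕ) (hi : i < ℓ) (b : ℕ → ℤ)
    (hb : ∀ j < ℓ, IsGreatest (regionSet ℓ l (j : ℤ)) (b j)) :
    ∀ j < ℓ, IsGreatest (regionSet ℓ (siAction ℓ i l) (j : ℤ))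
      (if i = 0 then
        (if j = 0 then b (ℓ - 1) + 1 else if j = ℓ - 1 then b 0 - 1 else b j)
      else
        (if j = i then b (i - 1) else if j = i - 1 then b i else b j)) := by
  intro j hj
  rw [ite_nVector_eq b hj]
  split_ifs with hji hjp
  · subst hji
    rw [regionSet_siAction_self hℓ hi hp]
    exact (monotone_id.add_const _).map_isGreatest (hb _ (prevResidue_lt hi))
  · subst hjp
    rw [regionSet_siAction_prevResidue hℓ hi hp]
    exact Monotone.map_isGreatest (fun _ _ h => sub_le_sub_right h _) (hb i hi)
  · rw [regionSet_siAction_of_ne hℓ hp hj hji hjp]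
    exact hb j hj

/-- If (b₀,...,b_{ℓ-1}) is the n-vector of the ℓ-core λ, then the n-vector of
s_i(λ) is obtained by swapping b_{i-1}, b_i for 1 ≤ i ≤ ℓ-1, and is
(b_{ℓ-1}+1, b₁, ..., b_{ℓ-2}, b₀-1) for i = 0. -/
theorem stmt14 (ℓ : ℕ) (hℓ : 2 ≤ ℓ) (l : List ℕ)
    (hp : IsPartition l) (hc : IsCore ℓ l)
    (i : ℕ) (hi : i < ℓ) (b : ℕ → ℤ)
    (hb : ∀ j < ℓ, IsGreatest (regionSet ℓ l (j : ℤ)) (b j)) :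
    ∀ j < ℓ, IsGreatest (regionSet ℓ (siAction ℓ i l) (j : ℤ))
      (if i = 0 then
        (if j = 0 then b (ℓ - 1) + 1 else if j = ℓ - 1 then b 0 - 1 else b j)
      else
        (if j = i then b (i - 1) else if j = i - 1 then b i else b j)) :=
  stmt14_general ℓ hℓ l hp i hi b hb
end
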